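/- arXiv:1704.04089 — 5 statements merged into one kernel-verified Lean document; each statement's English description precedes it below -/
import Mathlib

section
/- Let C be a nonempty finite set and Γ a subgroup of the symmetric group S(C). Then Γ is fully cancelling if and only if Γ is the trivial subgroup {id}. -/
/-- The transformed bijection `f_{α,β,γ}(a,c) = (β × γ)(f(α⁻¹ a, γ⁻¹ c))`. -/
def transform {A B C : Type} (f : A × C ≃ B × C)
    (α : Equiv.Perm A) (β : Equiv.Perm B) (γ : Equiv.Perm C) : A × C ≃ B × C :=
  ((Equiv.prodCongr α γ).symm.trans f).trans (Equiv.prodCongr β γ)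

/-- The transformed quotient `h_{α,β}(a) = β(h(α⁻¹ a))`. -/
def transformQ {A B : Type} (h : A ≃ B) (α : Equiv.Perm A) (β : Equiv.Perm B) : A ≃ B :=
  (α.symm.trans h).trans β

/-- `h : A ≃ B` is a `Γ`-equivariant quotient of `f : A × C ≃ B × C`. -/
def IsEquivQuotient {C : Type} (Γ : Subgroup (Equiv.Perm C)) {A B : Type}
    (f : A × C ≃ B × C) (h : A ≃ B) : Prop :=
  ∀ (α : Equiv.Perm A) (β : Equiv.Perm B) (γ : Equiv.Perm C), γ ∈ Γ →
    transform f α β γ = f → transformQ h α β = h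

/-- `Γ` is fully cancelling: every bijection `f : A × C ≃ B × C` has a
`Γ`-equivariant quotient. -/
def FullyCancelling (C : Type) (Γ : Subgroup (Equiv.Perm C)) : Prop :=
  ∀ (A B : Type) (f : A × C ≃ B × C), ∃ h : A ≃ B, IsEquivQuotient Γ f h

/-- `Γ` is finitely cancelling: every bijection `f : A × C ≃ B × C` with `A`, `B`
finite has a `Γ`-equivariant quotient. -/
def FinitelyCancelling (C : Type) (Γ : Subgroup (Equiv.Perm C)) : Prop :=
  ∀ (A B : Type), Finite A → Finite B →
    ∀ (f : A × C ≃ B × C), ∃ h : A ≃ B, IsEquivQuotient Γ f h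


set_option linter.unusedSectionVars false
set_option linter.unnecessarySeqFocus false
set_option maxHeartbeats 1000000

namespace FCT

variable {A B C : Type}

variable {A B C : Type}

lemma transform_one_apply (f : A × C ≃ B × C) (α : Equiv.Perm A) (β : Equiv.Perm B)
    (x : A × C) :
    transform f α β 1 x = (β (f (α.symm x.1, x.2)).1, (f (α.symm x.1, x.2)).2) := rfl

def St (f : A × C ≃ B × C) (α : Equiv.Perm A) (β : Equiv.Perm B) : Prop :=
  ∀ a c, f (α a, c) = (β (f (a, c)).1, (f (a, c)).2)

lemma st_iff (f : A × C ≃ B × C) (α : Equiv.Perm A) (β : Equiv.Perm B) :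
    transform f α β 1 = f ↔ St f α β := by
  rw [Equiv.ext_iff]
  constructor
  · intro h a c
    have := h (α a, c)
    rw [transform_one_apply] at this
    simp only [Equiv.symm_apply_apply] at this
    rw [← this]
  · intro h x
    rw [transform_one_apply, ← h]
    simp

lemma St.one (f : A × C ≃ B × C) : St f 1 1 := by intro a c; simp

lemma St.mul {f : A × C ≃ B × C} {α β α' β'} (h : St f α β) (h' : St f α' β') :
    St f (α * α') (β * β') := by
  intro a c
  simp only [Equiv.Perm.mul_apply]
  rw [h, h']

lemma St.inv {f : A × C ≃ B × C} {α β} (h : St f α β) : St f α⁻¹ β⁻¹ := by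
  intro a c
  have h2 := h (α⁻¹ a) c
  simp only [Equiv.Perm.coe_inv, Equiv.apply_symm_apply] at h2
  rw [h2]
  simp

lemma St.symm_apply {f : A × C ≃ B × C} {α β} (h : St f α β) (b : B) (c : C) :
    f.symm (β b, c) = (α (f.symm (b, c)).1, (f.symm (b, c)).2) := by
  apply f.injective
  have := h (f.symm (b, c)).1 (f.symm (b, c)).2
  simp only [Prod.mk.eta, Equiv.apply_symm_apply] at this ⊢
  rw [this]

-- helper
lemma inv_mul_apply_eq {X : Type} (σ τ : Equiv.Perm X) (x : X) :
    (τ⁻¹ * σ) x = x ↔ σ x = τ x := by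
  simp [Equiv.Perm.mul_apply, Equiv.Perm.inv_def, Equiv.symm_apply_eq]

def sA (f : A × C ≃ B × C) : Setoid A where
  r a a' := ∃ α β, St f α β ∧ α a = a'
  iseqv := by
    constructor
    · exact fun a => ⟨1, 1, St.one f, rfl⟩
    · rintro a a' ⟨α, β, h, rfl⟩
      exact ⟨α⁻¹, β⁻¹, h.inv, by simp⟩
    · rintro a a' a'' ⟨α, β, h, rfl⟩ ⟨α', β', h', rfl⟩
      exact ⟨α' * α, β' * β, h'.mul h, rfl⟩

def sB (f : A × C ≃ B × C) : Setoid B where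
  r b b' := ∃ α β, St f α β ∧ β b = b'
  iseqv := by
    constructor
    · exact fun b => ⟨1, 1, St.one f, rfl⟩
    · rintro b b' ⟨α, β, h, rfl⟩
      exact ⟨α⁻¹, β⁻¹, h.inv, by simp⟩
    · rintro b b' b'' ⟨α, β, h, rfl⟩ ⟨α', β', h', rfl⟩
      exact ⟨α' * α, β' * β, h'.mul h, rfl⟩

def Aligned (f : A × C ≃ B × C) (a : A) (b : B) : Prop :=
  ∀ α β, St f α β → (α a = a ↔ β b = b)

lemma Aligned.congr {f : A × C ≃ B × C} {a b} (hab : Aligned f a b)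
    {α β α' β'} (h : St f α β) (h' : St f α' β') :
    α a = α' a ↔ β b = β' b := by
  rw [← inv_mul_apply_eq, ← inv_mul_apply_eq]
  exact hab _ _ (h'.inv.mul h)

/-- `Fx x α β` : the pair `(α, β)` fixes the point `x : A ⊕ B`. -/
def Fx : A ⊕ B → Equiv.Perm A → Equiv.Perm B → Prop
  | Sum.inl a, α, _ => α a = a
  | Sum.inr b, _, β => β b = b

/-- `x` and `y` lie in `G`-isomorphic orbits. -/
def tRel (f : A × C ≃ B × C) (x y : A ⊕ B) : Prop :=
  ∃ α₀ β₀, St f α₀ β₀ ∧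
    ∀ α β, St f α β → (Fx y α β ↔ Fx x (α₀⁻¹ * α * α₀) (β₀⁻¹ * β * β₀))

def tS (f : A × C ≃ B × C) : Setoid (A ⊕ B) where
  r := tRel f
  iseqv := by
    constructor
    · intro x
      refine ⟨1, 1, St.one f, fun α β h => ?_⟩
      simp
    · rintro x y ⟨α₀, β₀, h₀, H⟩
      refine ⟨α₀⁻¹, β₀⁻¹, h₀.inv, fun α β h => ?_⟩
      have := H (α₀ * α * α₀⁻¹) (β₀ * β * β₀⁻¹) ((h₀.mul h).mul h₀.inv)
      rw [show α₀⁻¹ * (α₀ * α * α₀⁻¹) * α₀ = α by group,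
         show β₀⁻¹ * (β₀ * β * β₀⁻¹) * β₀ = β by group] at this
      rw [show α₀⁻¹⁻¹ * α * α₀⁻¹ = α₀ * α * α₀⁻¹ by group,
         show β₀⁻¹⁻¹ * β * β₀⁻¹ = β₀ * β * β₀⁻¹ by group]
      exact this.symm
    · rintro x y z ⟨α₀, β₀, h₀, H₀⟩ ⟨α₁, β₁, h₁, H₁⟩
      refine ⟨α₁ * α₀, β₁ * β₀, h₁.mul h₀, fun α β h => ?_⟩
      have t1 := H₁ α β h
      have t2 := H₀ (α₁⁻¹ * α * α₁) (β₁⁻¹ * β * β₁) ((h₁.inv.mul h).mul h₁)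
      rw [show (α₁ * α₀)⁻¹ * α * (α₁ * α₀) = α₀⁻¹ * (α₁⁻¹ * α * α₁) * α₀ by group,
         show (β₁ * β₀)⁻¹ * β * (β₁ * β₀) = β₀⁻¹ * (β₁⁻¹ * β * β₁) * β₀ by group]
      exact t1.trans t2

lemma rel_inl {f : A × C ≃ B × C} {a α β} (h : St f α β) :
    tRel f (Sum.inl a) (Sum.inl (α a)) := by
  refine ⟨α, β, h, fun α' β' h' => ?_⟩
  show α' (α a) = α a ↔ (α⁻¹ * α' * α) a = a
  rw [show (α⁻¹ * α' * α) a = α⁻¹ (α' (α a)) from rfl]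
  simp [Equiv.Perm.inv_def, Equiv.symm_apply_eq]

lemma rel_inr {f : A × C ≃ B × C} {b β α} (h : St f α β) :
    tRel f (Sum.inr b) (Sum.inr (β b)) := by
  refine ⟨α, β, h, fun α' β' h' => ?_⟩
  show β' (β b) = β b ↔ (β⁻¹ * β' * β) b = b
  rw [show (β⁻¹ * β' * β) b = β⁻¹ (β' (β b)) from rfl]
  simp [Equiv.Perm.inv_def, Equiv.symm_apply_eq]

lemma rel_of_aligned {f : A × C ≃ B × C} {a b} (h : Aligned f a b) :
    tRel f (Sum.inl a) (Sum.inr b) := by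
  refine ⟨1, 1, St.one f, fun α β h' => ?_⟩
  show β b = b ↔ (1⁻¹ * α * 1) a = a
  rw [show (1 : Equiv.Perm A)⁻¹ * α * 1 = α by group]
  exact (h α β h').symm

lemma aligned_of_rel {f : A × C ≃ B × C} {a b} (h : tRel f (Sum.inl a) (Sum.inr b)) :
    ∃ α β, St f α β ∧ Aligned f a (β b) := by
  obtain ⟨α₀, β₀, h₀, H⟩ := h
  refine ⟨α₀⁻¹, β₀⁻¹, h₀.inv, fun α β h => ?_⟩
  have := H (α₀ * α * α₀⁻¹) (β₀ * β * β₀⁻¹) ((h₀.mul h).mul h₀.inv)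
  rw [show α₀⁻¹ * (α₀ * α * α₀⁻¹) * α₀ = α by group,
    show β₀⁻¹ * (β₀ * β * β₀⁻¹) * β₀ = β by group] at this
  have key : (β₀ * β * β₀⁻¹) b = b ↔ β (β₀⁻¹ b) = β₀⁻¹ b := by
    rw [show (β₀ * β * β₀⁻¹) b = β₀ (β (β₀⁻¹ b)) from rfl]
    simp [Equiv.Perm.inv_def, Equiv.apply_eq_iff_eq_symm_apply]
  exact this.symm.trans key

section Quot

variable (f : A × C ≃ B × C)

/-- induced map on orbit spaces crossed with C -/
def EA : Quotient (sA f) × C → Quotient (sB f) × C := fun x =>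
  Quotient.liftOn x.1
    (fun a => (Quotient.mk (sB f) (f (a, x.2)).1, (f (a, x.2)).2))
    (by
      rintro a a' ⟨α, β, h, rfl⟩
      rw [h a x.2]
      exact Prod.ext (Quotient.sound (⟨α, β, h, rfl⟩ : (sB f).r _ _)) rfl)

def EB : Quotient (sB f) × C → Quotient (sA f) × C := fun x =>
  Quotient.liftOn x.1
    (fun b => (Quotient.mk (sA f) (f.symm (b, x.2)).1, (f.symm (b, x.2)).2))
    (by
      rintro b b' ⟨α, β, h, rfl⟩
      rw [St.symm_apply h b x.2]
      exact Prod.ext (Quotient.sound (⟨α, β, h, rfl⟩ : (sA f).r _ _)) rfl)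

lemma EB_EA (x) : EB f (EA f x) = x := by
  obtain ⟨qa, c⟩ := x
  induction qa using Quotient.inductionOn with
  | h a =>
    show EB f (Quotient.mk (sB f) (f (a, c)).1, (f (a, c)).2) = _
    show (Quotient.mk (sA f) (f.symm ((f (a, c)).1, (f (a, c)).2)).1,
      (f.symm ((f (a, c)).1, (f (a, c)).2)).2) = _
    simp only [Prod.mk.eta, Equiv.symm_apply_apply]

lemma EA_EB (x) : EA f (EB f x) = x := by
  obtain ⟨qb, c⟩ := x
  induction qb using Quotient.inductionOn with
  | h b =>
    show EA f (Quotient.mk (sA f) (f.symm (b, c)).1, (f.symm (b, c)).2) = _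
    show (Quotient.mk (sB f) (f ((f.symm (b, c)).1, (f.symm (b, c)).2)).1,
      (f ((f.symm (b, c)).1, (f.symm (b, c)).2)).2) = _
    simp only [Prod.mk.eta, Equiv.apply_symm_apply]

def Ebar : Quotient (sA f) × C ≃ Quotient (sB f) × C :=
  ⟨EA f, EB f, EB_EA f, EA_EB f⟩

def tauA : Quotient (sA f) → Quotient (tS f) :=
  Quotient.lift (fun a => Quotient.mk (tS f) (Sum.inl a))
    (by rintro a a' ⟨α, β, h, rfl⟩; exact Quotient.sound (rel_inl h))

def tauB : Quotient (sB f) → Quotient (tS f) :=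
  Quotient.lift (fun b => Quotient.mk (tS f) (Sum.inr b))
    (by rintro b b' ⟨α, β, h, rfl⟩; exact Quotient.sound (rel_inr h))

lemma aligned_of_f (a : A) (c : C) : Aligned f a (f (a, c)).1 := by
  intro α β h
  constructor
  · intro ha
    have := h a c
    rw [ha] at this
    exact (congrArg Prod.fst this).symm
  · intro hb
    have := h a c
    rw [hb, Prod.mk.eta] at this
    have h2 := f.injective this
    exact congrArg Prod.fst h2

lemma tauB_Ebar (qa : Quotient (sA f)) (c : C) :
    tauB f (Ebar f (qa, c)).1 = tauA f qa := by
  induction qa using Quotient.inductionOn with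
  | h a =>
    show tauB f (Quotient.mk (sB f) (f (a, c)).1) = tauA f (Quotient.mk (sA f) a)
    show Quotient.mk (tS f) (Sum.inr (f (a, c)).1) = Quotient.mk (tS f) (Sum.inl a)
    exact (Quotient.sound (rel_of_aligned (aligned_of_f f a c))).symm

lemma tauA_Ebar_symm (qb : Quotient (sB f)) (c : C) :
    tauA f ((Ebar f).symm (qb, c)).1 = tauB f qb := by
  have := tauB_Ebar f ((Ebar f).symm (qb, c)).1 ((Ebar f).symm (qb, c)).2
  rw [Prod.mk.eta, Equiv.apply_symm_apply] at this
  exact this.symm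

/-- the fiber equivalence over a type `t` -/
def fiberEquiv (t : Quotient (tS f)) :
    {qa : Quotient (sA f) // tauA f qa = t} × C ≃
      {qb : Quotient (sB f) // tauB f qb = t} × C where
  toFun x := (⟨(Ebar f (x.1.1, x.2)).1, by rw [tauB_Ebar]; exact x.1.2⟩,
    (Ebar f (x.1.1, x.2)).2)
  invFun y := (⟨((Ebar f).symm (y.1.1, y.2)).1, by rw [tauA_Ebar_symm]; exact y.1.2⟩,
    ((Ebar f).symm (y.1.1, y.2)).2)
  left_inv x := by
    refine Prod.ext (Subtype.ext ?_) ?_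
    · show ((Ebar f).symm ((Ebar f (x.1.1, x.2)).1, (Ebar f (x.1.1, x.2)).2)).1 = _
      rw [Prod.mk.eta, Equiv.symm_apply_apply]
    · show ((Ebar f).symm ((Ebar f (x.1.1, x.2)).1, (Ebar f (x.1.1, x.2)).2)).2 = _
      rw [Prod.mk.eta, Equiv.symm_apply_apply]
  right_inv y := by
    refine Prod.ext (Subtype.ext ?_) ?_
    · show (Ebar f (((Ebar f).symm (y.1.1, y.2)).1, ((Ebar f).symm (y.1.1, y.2)).2)).1 = _
      rw [Prod.mk.eta, Equiv.apply_symm_apply]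
    · show (Ebar f (((Ebar f).symm (y.1.1, y.2)).1, ((Ebar f).symm (y.1.1, y.2)).2)).2 = _
      rw [Prod.mk.eta, Equiv.apply_symm_apply]

end Quot

/-- cancellation of a finite nonempty factor, via cardinal arithmetic -/
lemma cancel_finite {X Y Z : Type} [Finite Z] [Nonempty Z] (e : X × Z ≃ Y × Z) :
    Nonempty (X ≃ Y) := by
  rw [← Cardinal.eq]
  have hZ0 : Cardinal.mk Z ≠ 0 := Cardinal.mk_ne_zero Z
  have hZfin : Cardinal.mk Z < Cardinal.aleph0 := Cardinal.lt_aleph0_of_finite Z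
  have hmul : Cardinal.mk X * Cardinal.mk Z = Cardinal.mk Y * Cardinal.mk Z := by
    have := Cardinal.mk_congr e
    simpa only [Cardinal.mk_prod, Cardinal.lift_id] using this
  by_cases hX : Cardinal.mk X < Cardinal.aleph0
  · have hY : Cardinal.mk Y < Cardinal.aleph0 := by
      by_contra hY
      push_neg at hY
      have h1 : Cardinal.mk X * Cardinal.mk Z < Cardinal.aleph0 :=
        Cardinal.mul_lt_aleph0 hX hZfin
      rw [hmul] at h1
      have h2 : Cardinal.mk Y ≤ Cardinal.mk Y * Cardinal.mk Z := by
        conv_lhs => rw [← mul_one (Cardinal.mk Y)]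
        exact mul_le_mul_right (Cardinal.one_le_iff_ne_zero.2 hZ0) _
      exact absurd (lt_of_le_of_lt (hY.trans h2) h1) (lt_irrefl _)
    obtain ⟨x, hx⟩ := Cardinal.lt_aleph0.1 hX
    obtain ⟨y, hy⟩ := Cardinal.lt_aleph0.1 hY
    obtain ⟨z, hz⟩ := Cardinal.lt_aleph0.1 hZfin
    rw [hx, hy, hz] at hmul
    have hz0 : z ≠ 0 := by rintro rfl; exact hZ0 (by rw [hz]; simp)
    rw [hx, hy]
    have : x * z = y * z := by exact_mod_cast hmul
    norm_cast
    exact Nat.eq_of_mul_eq_mul_right (Nat.pos_of_ne_zero hz0) this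
  · push_neg at hX
    have hXm : Cardinal.mk X * Cardinal.mk Z = Cardinal.mk X :=
      Cardinal.mul_eq_left hX (hZfin.le.trans hX) hZ0
    have hY : Cardinal.aleph0 ≤ Cardinal.mk Y := by
      by_contra hY
      push_neg at hY
      have h1 : Cardinal.mk Y * Cardinal.mk Z < Cardinal.aleph0 :=
        Cardinal.mul_lt_aleph0 hY hZfin
      rw [← hmul, hXm] at h1
      exact absurd h1 (not_lt.2 hX)
    have hYm : Cardinal.mk Y * Cardinal.mk Z = Cardinal.mk Y :=
      Cardinal.mul_eq_left hY (hZfin.le.trans hY) hZ0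
    rw [← hXm, ← hYm, hmul]

section Main

variable [Finite C] [Nonempty C] (f : A × C ≃ B × C)

noncomputable def Phi : Quotient (sA f) ≃ Quotient (sB f) :=
  Equiv.ofFiberEquiv (f := tauA f) (g := tauB f)
    (fun t => Classical.choice (cancel_finite (fiberEquiv f t)))

lemma tau_Phi (qa : Quotient (sA f)) : tauB f (Phi f qa) = tauA f qa :=
  Equiv.ofFiberEquiv_map _ _

lemma exists_bstar (qa : Quotient (sA f)) :
    ∃ b : B, Aligned f qa.out b ∧ Quotient.mk (sB f) b = Phi f qa := by
  have h1 : Quotient.mk (tS f) (Sum.inl qa.out) = Quotient.mk (tS f) (Sum.inr (Phi f qa).out) := by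
    have h2 : tauA f (Quotient.mk (sA f) qa.out) = tauB f (Quotient.mk (sB f) (Phi f qa).out) := by
      rw [Quotient.out_eq, Quotient.out_eq, tau_Phi]
    exact h2
  have h3 : tRel f (Sum.inl qa.out) (Sum.inr (Phi f qa).out) := Quotient.exact h1
  obtain ⟨α, β, hst, hal⟩ := aligned_of_rel h3
  refine ⟨β (Phi f qa).out, hal, ?_⟩
  rw [show Quotient.mk (sB f) (β (Phi f qa).out) = Quotient.mk (sB f) (Phi f qa).out from
    (Quotient.sound (⟨α, β, hst, rfl⟩ : (sB f).r _ _)).symm, Quotient.out_eq]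

noncomputable def bstar (qa : Quotient (sA f)) : B := (exists_bstar f qa).choose

lemma bstar_aligned (qa : Quotient (sA f)) : Aligned f qa.out (bstar f qa) :=
  (exists_bstar f qa).choose_spec.1

lemma bstar_mk (qa : Quotient (sA f)) : Quotient.mk (sB f) (bstar f qa) = Phi f qa :=
  (exists_bstar f qa).choose_spec.2

lemma exists_pair (a : A) :
    ∃ q : Equiv.Perm A × Equiv.Perm B, St f q.1 q.2 ∧ q.1 (Quotient.mk (sA f) a).out = a := by
  obtain ⟨α, β, hst, he⟩ := Quotient.mk_out (s := sA f) a
  exact ⟨(α, β), hst, he⟩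

noncomputable def hmap (a : A) : B :=
  (exists_pair f a).choose.2 (bstar f (Quotient.mk (sA f) a))

lemma hmap_eq {a : A} {α : Equiv.Perm A} {β : Equiv.Perm B} (h : St f α β)
    (ha : α (Quotient.mk (sA f) a).out = a) :
    hmap f a = β (bstar f (Quotient.mk (sA f) a)) := by
  obtain ⟨hst, he⟩ := (exists_pair f a).choose_spec
  have key := (bstar_aligned f (Quotient.mk (sA f) a)).congr hst h
  exact key.1 (he.trans ha.symm)

lemma mk_hmap (a : A) : Quotient.mk (sB f) (hmap f a) = Phi f (Quotient.mk (sA f) a) := by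
  obtain ⟨hst, he⟩ := (exists_pair f a).choose_spec
  rw [show hmap f a = (exists_pair f a).choose.2 (bstar f (Quotient.mk (sA f) a)) from rfl]
  rw [show Quotient.mk (sB f) ((exists_pair f a).choose.2 (bstar f (Quotient.mk (sA f) a)))
      = Quotient.mk (sB f) (bstar f (Quotient.mk (sA f) a)) from
    (Quotient.sound (⟨_, _, hst, rfl⟩ : (sB f).r _ _)).symm]
  exact bstar_mk f _

lemma hmap_equivariant {α : Equiv.Perm A} {β : Equiv.Perm B} (h : St f α β) (a : A) :
    hmap f (α a) = β (hmap f a) := by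
  obtain ⟨hst, he⟩ := (exists_pair f a).choose_spec
  set q := (exists_pair f a).choose with hq
  have hmk : Quotient.mk (sA f) (α a) = Quotient.mk (sA f) a :=
    Quotient.sound (⟨α⁻¹, β⁻¹, h.inv, by simp⟩ : (sA f).r _ _)
  have h1 : hmap f (α a) = (β * q.2) (bstar f (Quotient.mk (sA f) (α a))) := by
    apply hmap_eq f (h.mul hst)
    rw [hmk]
    show α (q.1 _) = α a
    rw [he]
  rw [h1, hmk]
  show β (q.2 (bstar f (Quotient.mk (sA f) a))) = β (hmap f a)
  rfl

lemma hmap_injective : Function.Injective (hmap f) := by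
  intro a a' hh
  have hPhi : Phi f (Quotient.mk (sA f) a) = Phi f (Quotient.mk (sA f) a') := by
    rw [← mk_hmap, ← mk_hmap, hh]
  have hq : Quotient.mk (sA f) a = Quotient.mk (sA f) a' := (Phi f).injective hPhi
  obtain ⟨hst, he⟩ := (exists_pair f a).choose_spec
  obtain ⟨hst', he'⟩ := (exists_pair f a').choose_spec
  have hbst : bstar f (Quotient.mk (sA f) a) = bstar f (Quotient.mk (sA f) a') := by rw [hq]
  have hb : (exists_pair f a).choose.2 (bstar f (Quotient.mk (sA f) a))
      = (exists_pair f a').choose.2 (bstar f (Quotient.mk (sA f) a)) := by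
    conv_rhs => rw [hbst]
    exact hh
  have key := (bstar_aligned f (Quotient.mk (sA f) a)).congr hst hst'
  have ha := key.2 hb
  rw [he] at ha
  rw [ha]
  have : (Quotient.mk (sA f) a).out = (Quotient.mk (sA f) a').out := by rw [hq]
  rw [this, he']

lemma hmap_surjective : Function.Surjective (hmap f) := by
  intro b
  set t := (Phi f).symm (Quotient.mk (sB f) b) with ht
  have h1 : Quotient.mk (sB f) (bstar f t) = Quotient.mk (sB f) b := by
    rw [bstar_mk, ht, Equiv.apply_symm_apply]
  obtain ⟨α, β, hst, he⟩ := Quotient.exact h1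
  refine ⟨α t.out, ?_⟩
  have hmk : Quotient.mk (sA f) (α t.out) = t := by
    rw [show Quotient.mk (sA f) (α t.out) = Quotient.mk (sA f) t.out from
      (Quotient.sound (⟨α, β, hst, rfl⟩ : (sA f).r _ _)).symm, Quotient.out_eq]
  have h2 : hmap f (α t.out) = β (bstar f (Quotient.mk (sA f) (α t.out))) := by
    apply hmap_eq f hst
    rw [hmk]
  rw [h2, hmk, he]

noncomputable def hEquiv : A ≃ B :=
  Equiv.ofBijective (hmap f) ⟨hmap_injective f, hmap_surjective f⟩

end Main



/-- `e` intertwines `u` and `v`. -/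
def Itw {X Y : Type} (u : X → X) (v : Y → Y) (e : X ≃ Y) : Prop :=
  ∀ x, e (u x) = v (e x)

namespace Itw

lemma trans {X Y Z : Type} {u v w} {e : X ≃ Y} {e' : Y ≃ Z}
    (h : Itw u v e) (h' : Itw v w e') : Itw u w (e.trans e') := by
  intro x; simp [Equiv.trans_apply, h x, h' (e x)]

lemma prodCongr {X Y X' Y' : Type} {u v u' v'} {e : X ≃ Y} {e' : X' ≃ Y'}
    (h : Itw u v e) (h' : Itw u' v' e') :
    Itw (Prod.map u u') (Prod.map v v') (e.prodCongr e') := by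
  rintro ⟨x, x'⟩
  simp [Equiv.prodCongr_apply, Prod.map, h x, h' x']

lemma sumCongr {X Y X' Y' : Type} {u v u' v'} {e : X ≃ Y} {e' : X' ≃ Y'}
    (h : Itw u v e) (h' : Itw u' v' e') :
    Itw (Sum.map u u') (Sum.map v v') (e.sumCongr e') := by
  rintro (x | x')
  · show Sum.inl (e (u x)) = Sum.inl (v (e x))
    rw [h x]
  · show Sum.inr (e' (u' x')) = Sum.inr (v' (e' x'))
    rw [h' x']

lemma id_id {X Y : Type} (e : X ≃ Y) : Itw id id e := fun _ => rfl

lemma refl {X : Type} (u : X → X) : Itw u u (Equiv.refl X) := fun _ => rfl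

lemma symm {X Y : Type} {u v} {e : X ≃ Y} (h : Itw u v e) : Itw v u e.symm := by
  intro y
  apply e.injective
  rw [Equiv.apply_symm_apply, h, Equiv.apply_symm_apply]

end Itw

/-- distribution equivs are intertwining -/
lemma itw_prodSumDistrib {X Y Z : Type} (u : X → X) (v : Y → Y) (w : Z → Z) :
    Itw (Prod.map u (Sum.map v w)) (Sum.map (Prod.map u v) (Prod.map u w))
      (Equiv.prodSumDistrib X Y Z) := by
  rintro ⟨x, y | z⟩ <;> rfl

lemma itw_sumProdDistrib {X Y Z : Type} (u : X → X) (v : Y → Y) (w : Z → Z) :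
    Itw (Prod.map (Sum.map u v) w) (Sum.map (Prod.map u w) (Prod.map v w))
      (Equiv.sumProdDistrib X Y Z) := by
  rintro ⟨x | y, z⟩ <;> rfl

lemma itw_shuffle {X Y Z : Type} (u : X → X) (v : Y → Y) (w : Z → Z) :
    Itw (Sum.map (Sum.map u v) w) (Sum.map (Sum.map u w) v)
      (((Equiv.sumAssoc X Y Z).trans
        ((Equiv.refl X).sumCongr (Equiv.sumComm Y Z))).trans (Equiv.sumAssoc X Z Y).symm) := by
  rintro ((x | y) | z) <;> rfl

lemma itw_prodComm {X Y : Type} (u : X → X) (v : Y → Y) :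
    Itw (Prod.map u v) (Prod.map v u) (Equiv.prodComm X Y) := by
  rintro ⟨x, y⟩ <;> rfl



section Bad

variable {C : Type} (g : Equiv.Perm C) (p : ℕ) [NeZero p] [Fact (1 < p)] (c₀ : C)

lemma pow_fix (σ : Equiv.Perm C) (c : C) (h : σ c = c) (n : ℕ) : (σ ^ n) c = c := by
  induction n with
  | zero => simp
  | succ n ih => rw [pow_succ, Equiv.Perm.mul_apply, h, ih]

lemma gpow_mod (horder : orderOf g = p) (a : ℕ) : g ^ (a % p) = g ^ a := by
  rw [← horder]; exact pow_mod_orderOf ..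

def iot (j : ZMod p) : C := (g ^ j.val) c₀

lemma iot_g (horder : orderOf g = p) (j : ZMod p) :
    g (iot g p c₀ j) = iot g p c₀ (j + 1) := by
  unfold iot
  have h1 : (j + 1).val = (j.val + 1) % p := by
    rw [ZMod.val_add, ZMod.val_one]
  rw [h1, gpow_mod g p horder, pow_succ']
  rfl

lemma iot_inj (horder : orderOf g = p) (hc₀ : g c₀ ≠ c₀)
    (hfield : ∀ d : ZMod p, d ≠ 0 → ∃ u : ZMod p, d * u = 1) :
    Function.Injective (iot g p c₀) := by
  intro j k h
  by_contra hne
  have hd : j - k ≠ 0 := sub_ne_zero.2 hne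
  obtain ⟨u, hu⟩ := hfield _ hd
  have h1 : (g ^ (j - k).val) ((g ^ k.val) c₀) = (g ^ k.val) c₀ := by
    have h2 : (g ^ (j - k).val) ((g ^ k.val) c₀) = (g ^ ((j - k).val + k.val)) c₀ := by
      rw [pow_add]; rfl
    rw [h2, ← gpow_mod g p horder ((j - k).val + k.val), ← ZMod.val_add, sub_add_cancel]
    exact h
  have h3 : (g ^ (j - k).val) c₀ = c₀ := by
    have h4 := h1
    rw [show (g ^ (j - k).val) ((g ^ k.val) c₀) = (g ^ k.val) ((g ^ (j - k).val) c₀) by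
      rw [← Equiv.Perm.mul_apply, ← Equiv.Perm.mul_apply, pow_mul_comm]] at h4
    exact (g ^ k.val).injective h4
  have h5 : ((g ^ (j - k).val) ^ u.val) c₀ = c₀ := pow_fix _ _ h3 _
  rw [← pow_mul, ← gpow_mod g p horder ((j - k).val * u.val), ← ZMod.val_mul, hu,
    ZMod.val_one, pow_one] at h5
  exact hc₀ h5

def OrbSet : Set C := Set.range (iot g p c₀)

lemma mem_orb_iff (horder : orderOf g = p) (c : C) :
    c ∈ OrbSet g p c₀ ↔ g c ∈ OrbSet g p c₀ := by
  constructor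
  · rintro ⟨j, rfl⟩
    exact ⟨j + 1, (iot_g g p c₀ horder j).symm⟩
  · rintro ⟨j, hj⟩
    refine ⟨j - 1, ?_⟩
    apply g.injective
    rw [iot_g g p c₀ horder (j - 1), sub_add_cancel, hj]

def gO (horder : orderOf g = p) : Equiv.Perm (OrbSet g p c₀) :=
  g.subtypePerm (fun c => (mem_orb_iff g p c₀ horder c).symm)

lemma mem_orb_compl_iff (horder : orderOf g = p) (c : C) :
    c ∈ (OrbSet g p c₀)ᶜ ↔ g c ∈ (OrbSet g p c₀)ᶜ :=
  not_iff_not.2 (mem_orb_iff g p c₀ horder c)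

def gOc (horder : orderOf g = p) : Equiv.Perm ((OrbSet g p c₀)ᶜ : Set C) :=
  g.subtypePerm (fun c => (mem_orb_compl_iff g p c₀ horder c).symm)

end Bad


section Build

variable {C : Type} (g : Equiv.Perm C) (p : ℕ) [NeZero p] [Fact (1 < p)] (c₀ : C)

lemma itw_prodSumDistrib' {X Y Z : Type} (v : Y → Y) (w : Z → Z) :
    Itw (Prod.map id (Sum.map v w)) (Sum.map (Prod.map id v) (Prod.map id w))
      (Equiv.prodSumDistrib X Y Z) := by
  rintro ⟨x, y | z⟩ <;> rfl

lemma itw_sumProdDistrib'' {X Y Z : Type} (w : Z → Z) :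
    Itw (Prod.map id w) (Sum.map (Prod.map id w) (Prod.map id w))
      (Equiv.sumProdDistrib X Y Z) := by
  rintro ⟨x | y, z⟩ <;> rfl

lemma i_sumCompl (horder : orderOf g = p) [DecidablePred (· ∈ OrbSet g p c₀)] :
    Itw (Sum.map ⇑(gO g p c₀ horder) ⇑(gOc g p c₀ horder)) ⇑g
      (Equiv.Set.sumCompl (OrbSet g p c₀)) := by
  rintro (⟨c, hc⟩ | ⟨c, hc⟩)
  · show Equiv.Set.sumCompl _ (Sum.inl ((gO g p c₀ horder) ⟨c, hc⟩)) = _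
    rw [Equiv.Set.sumCompl_apply_inl, Equiv.Set.sumCompl_apply_inl]
    rfl
  · show Equiv.Set.sumCompl _ (Sum.inr ((gOc g p c₀ horder) ⟨c, hc⟩)) = _
    rw [Equiv.Set.sumCompl_apply_inr, Equiv.Set.sumCompl_apply_inr]
    rfl

lemma i_shear (horder : orderOf g = p) :
    Itw (Prod.map ⇑(Equiv.addRight (1 : ZMod p)) id)
      (Prod.map ⇑(Equiv.addRight (1 : ZMod p)) ⇑g)
      (Equiv.prodShear (Equiv.refl (ZMod p)) (fun j => (g ^ j.val : Equiv.Perm C))) := by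
  rintro ⟨j, c⟩
  show ((j + 1 : ZMod p), (g ^ (j + 1).val) c) = (j + 1, g ((g ^ j.val) c))
  refine Prod.ext rfl ?_
  have h1 : (j + 1).val = (j.val + 1) % p := by
    rw [ZMod.val_add, ZMod.val_one]
  rw [h1, gpow_mod g p horder, pow_succ']
  rfl

variable (horder : orderOf g = p) (hc₀ : g c₀ ≠ c₀)
  (hfield : ∀ d : ZMod p, d ≠ 0 → ∃ u : ZMod p, d * u = 1)

noncomputable def iotEquiv : ZMod p ≃ (OrbSet g p c₀) :=
  Equiv.ofInjective _ (iot_inj g p c₀ horder hc₀ hfield)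

lemma i_iot :
    Itw ⇑(Equiv.addRight (1 : ZMod p)) ⇑(gO g p c₀ horder)
      (iotEquiv g p c₀ horder hc₀ hfield) := by
  intro j
  show iotEquiv g p c₀ horder hc₀ hfield (j + 1) = _
  apply Subtype.ext
  show iot g p c₀ (j + 1) = g (iot g p c₀ j)
  rw [iot_g g p c₀ horder]

open scoped Classical in
noncomputable def badEquiv (eN : ℕ ≃ ℕ ⊕ C) : ℕ × C ≃ (ℕ ⊕ ZMod p) × C :=
  ((Equiv.refl ℕ).prodCongr (Equiv.Set.sumCompl (OrbSet g p c₀)).symm).trans <|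
  (Equiv.prodSumDistrib ℕ _ _).trans <|
  ((eN.prodCongr (Equiv.refl _)).sumCongr (Equiv.refl _)).trans <|
  ((Equiv.sumProdDistrib ℕ C _).sumCongr (Equiv.refl _)).trans <|
  (((Equiv.sumAssoc _ _ _).trans
    ((Equiv.refl _).sumCongr (Equiv.sumComm _ _))).trans (Equiv.sumAssoc _ _ _).symm).trans <|
  ((Equiv.prodSumDistrib ℕ _ _).symm.sumCongr (Equiv.refl _)).trans <|
  (((Equiv.refl ℕ).prodCongr (Equiv.Set.sumCompl (OrbSet g p c₀))).sumCongr
    (Equiv.refl _)).trans <|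
  ((Equiv.refl _).sumCongr
    ((Equiv.refl C).prodCongr (iotEquiv g p c₀ horder hc₀ hfield).symm)).trans <|
  ((Equiv.refl _).sumCongr (Equiv.prodComm C (ZMod p))).trans <|
  ((Equiv.refl _).sumCongr
    (Equiv.prodShear (Equiv.refl (ZMod p)) (fun j => (g ^ j.val : Equiv.Perm C)))).trans <|
  (Equiv.sumProdDistrib ℕ (ZMod p) C).symm

open scoped Classical in
lemma badItw (eN : ℕ ≃ ℕ ⊕ C) :
    Itw (Prod.map id ⇑g) (Prod.map (Sum.map id ⇑(Equiv.addRight (1 : ZMod p))) ⇑g)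
      (badEquiv g p c₀ horder hc₀ hfield eN) := by
  unfold badEquiv
  apply Itw.trans
    (v := Prod.map id (Sum.map ⇑(gO g p c₀ horder) ⇑(gOc g p c₀ horder)))
  · exact Itw.prodCongr (Itw.refl id) (Itw.symm (i_sumCompl g p c₀ horder))
  apply Itw.trans
    (v := Sum.map (Prod.map id ⇑(gO g p c₀ horder)) (Prod.map id ⇑(gOc g p c₀ horder)))
  · exact itw_prodSumDistrib' _ _
  apply Itw.trans
    (v := Sum.map (Prod.map id ⇑(gO g p c₀ horder)) (Prod.map id ⇑(gOc g p c₀ horder)))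
  · exact Itw.sumCongr (Itw.prodCongr (Itw.id_id eN) (Itw.refl _)) (Itw.refl _)
  apply Itw.trans
    (v := Sum.map (Sum.map (Prod.map id ⇑(gO g p c₀ horder)) (Prod.map id ⇑(gO g p c₀ horder)))
      (Prod.map id ⇑(gOc g p c₀ horder)))
  · exact Itw.sumCongr (itw_sumProdDistrib'' _) (Itw.refl _)
  apply Itw.trans
    (v := Sum.map (Sum.map (Prod.map id ⇑(gO g p c₀ horder)) (Prod.map id ⇑(gOc g p c₀ horder)))
      (Prod.map id ⇑(gO g p c₀ horder)))
  · exact itw_shuffle _ _ _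
  apply Itw.trans
    (v := Sum.map (Prod.map id (Sum.map ⇑(gO g p c₀ horder) ⇑(gOc g p c₀ horder)))
      (Prod.map id ⇑(gO g p c₀ horder)))
  · exact Itw.sumCongr (Itw.symm (itw_prodSumDistrib' _ _)) (Itw.refl _)
  apply Itw.trans
    (v := Sum.map (Prod.map id ⇑g) (Prod.map id ⇑(gO g p c₀ horder)))
  · exact Itw.sumCongr (Itw.prodCongr (Itw.refl id) (i_sumCompl g p c₀ horder)) (Itw.refl _)
  apply Itw.trans
    (v := Sum.map (Prod.map id ⇑g) (Prod.map id ⇑(Equiv.addRight (1 : ZMod p))))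
  · exact Itw.sumCongr (Itw.refl _)
      (Itw.prodCongr (Itw.refl id) (Itw.symm (i_iot g p c₀ horder hc₀ hfield)))
  apply Itw.trans
    (v := Sum.map (Prod.map id ⇑g) (Prod.map ⇑(Equiv.addRight (1 : ZMod p)) id))
  · exact Itw.sumCongr (Itw.refl _) (itw_prodComm id _)
  apply Itw.trans
    (v := Sum.map (Prod.map id ⇑g) (Prod.map ⇑(Equiv.addRight (1 : ZMod p)) ⇑g))
  · exact Itw.sumCongr (Itw.refl _) (i_shear g p horder)
  exact Itw.symm (itw_sumProdDistrib id _ _)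

end Build


end FCT

theorem fully_cancelling_iff_trivial {C : Type} [Finite C] [Nonempty C]
    (Γ : Subgroup (Equiv.Perm C)) :
    FullyCancelling C Γ ↔ Γ = ⊥ := by
  constructor
  · -- forward: fully cancelling implies trivial
    intro hFC
    rw [Subgroup.eq_bot_iff_forall]
    intro γ hγ
    by_contra hne
    set m := orderOf γ with hm
    have hm1 : m ≠ 1 := fun h => hne (orderOf_eq_one_iff.mp h)
    have hm0 : m ≠ 0 := (orderOf_pos γ).ne'
    set p := m.minFac with hpdef
    have hp : p.Prime := Nat.minFac_prime hm1
    haveI : Fact (1 < p) := ⟨hp.one_lt⟩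
    haveI : NeZero p := ⟨hp.pos.ne'⟩
    set g := γ ^ (m / p) with hg
    have hgΓ : g ∈ Γ := Subgroup.pow_mem Γ hγ _
    have hdvd : p ∣ m := Nat.minFac_dvd m
    have horder : orderOf g = p := by
      rw [hg, orderOf_pow, ← hm]
      have h2 : m.gcd (m / p) = m / p :=
        Nat.gcd_eq_right ⟨p, (Nat.div_mul_cancel hdvd).symm⟩
      rw [h2, Nat.div_div_self hdvd hm0]
    have hg1 : g ≠ 1 := by
      intro h
      rw [h, orderOf_one] at horder
      exact hp.one_lt.ne' horder.symm
    obtain ⟨c₀, hc₀⟩ : ∃ c, g c ≠ c := by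
      by_contra h
      push_neg at h
      exact hg1 (Equiv.ext h)
    have hfield : ∀ d : ZMod p, d ≠ 0 → ∃ u : ZMod p, d * u = 1 := by
      haveI : Fact p.Prime := ⟨hp⟩
      exact fun d hd => ⟨d⁻¹, mul_inv_cancel₀ hd⟩
    obtain ⟨eN⟩ : Nonempty (ℕ ≃ ℕ ⊕ C) := by
      rw [← Cardinal.eq]
      simp only [Cardinal.mk_sum, Cardinal.lift_id, Cardinal.mk_nat]
      exact (Cardinal.add_eq_left le_rfl (Cardinal.mk_le_aleph0)).symm
    set β : Equiv.Perm (ℕ ⊕ ZMod p) :=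
      Equiv.sumCongr (Equiv.refl ℕ) (Equiv.addRight (1 : ZMod p)) with hβdef
    set f := FCT.badEquiv g p c₀ horder hc₀ hfield eN with hfdef
    have hit := FCT.badItw g p c₀ horder hc₀ hfield eN
    have hβpt : ∀ y : (ℕ ⊕ ZMod p) × C,
        (Equiv.prodCongr β g) y
          = Prod.map (Sum.map id ⇑(Equiv.addRight (1 : ZMod p))) ⇑g y := by
      rintro ⟨(x | j), c⟩ <;> rfl
    have htr : transform f 1 β g = f := by
      apply Equiv.ext
      rintro ⟨n, c⟩
      show (Equiv.prodCongr β g) (f ((Equiv.prodCongr 1 g).symm (n, c))) = f (n, c)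
      have h1 : (Equiv.prodCongr (1 : Equiv.Perm ℕ) g).symm (n, c) = (n, g.symm c) := rfl
      rw [h1, hβpt]
      have h2 := hit (n, g.symm c)
      have h3 : (Prod.map id ⇑g (n, g.symm c)) = (n, c) := by
        show (n, g (g.symm c)) = (n, c)
        rw [Equiv.apply_symm_apply]
      rw [h3] at h2
      exact h2.symm
    obtain ⟨h, hq⟩ := hFC ℕ (ℕ ⊕ ZMod p) f
    have hQ := hq 1 β g hgΓ htr
    have key : ∀ x : ℕ, β (h x) = h x := by
      intro x
      have := Equiv.ext_iff.mp hQ x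
      exact this
    obtain ⟨x, hx⟩ := h.surjective (Sum.inr (0 : ZMod p))
    have h0 : β (Sum.inr (0 : ZMod p)) = Sum.inr 0 := by rw [← hx]; exact key x
    have h1 : ((0 : ZMod p) + 1) = 0 := Sum.inr.inj h0
    rw [zero_add] at h1
    exact one_ne_zero h1
  · -- backward: trivial is fully cancelling
    intro hbot
    subst hbot
    intro A B f
    refine ⟨FCT.hEquiv f, ?_⟩
    intro α β γ hγ htr
    rw [Subgroup.mem_bot] at hγ
    subst hγ
    have hst : FCT.St f α β := (FCT.st_iff f α β).mp htr
    apply Equiv.ext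
    intro x
    show β ((FCT.hEquiv f) (α.symm x)) = (FCT.hEquiv f) x
    have heq := FCT.hmap_equivariant f hst (α.symm x)
    rw [Equiv.apply_symm_apply] at heq
    exact heq.symm
end

section
/- Let C be a nonempty finite set and Γ a subgroup of the symmetric group S(C). If Γ contains a non-identity permutation, then Γ is not fully cancelling: there exist sets A and B and a bijection f : A × C → B × C that admits no Γ-equivariant quotient. -/
lemma myFixPow {X : Type} (π : Equiv.Perm X) {x : X} (h : π x = x) (n : ℕ) :
    (π ^ n) x = x := by
  induction n with
  | zero => simp
  | succ n ih => rw [pow_succ, Equiv.Perm.mul_apply, h, ih]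

lemma myFixZpow {X : Type} (π : Equiv.Perm X) {x : X} (h : π x = x) (n : ℤ) :
    (π ^ n) x = x := by
  cases n with
  | ofNat m => simpa using myFixPow π h m
  | negSucc m =>
      have h1 : (π ^ (m + 1)) x = x := myFixPow π h (m + 1)
      rw [zpow_negSucc]
      calc (π ^ (m+1))⁻¹ x = (π ^ (m+1))⁻¹ ((π ^ (m+1)) x) := by rw [h1]
        _ = x := by simp

lemma myDvdOfFix {X : Type} {p : ℕ} (hp : p.Prime) (π : Equiv.Perm X) (hπ : π ^ p = 1)
    {x : X} (hx : π x ≠ x) {j : ℤ} (hj : (π ^ j) x = x) : (p : ℤ) ∣ j := by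
  by_contra hnd
  have hpp : Prime (p : ℤ) := Nat.prime_iff_prime_int.mp hp
  obtain ⟨a, b, hab⟩ := (Prime.coprime_iff_not_dvd hpp).mpr hnd
  apply hx
  have e1 : π ^ (a * (p:ℤ)) = 1 := by
    rw [mul_comm, zpow_mul, zpow_natCast, hπ, one_zpow]
  have e2 : (π ^ (b * j)) x = x := by
    rw [mul_comm, zpow_mul]
    exact myFixZpow (π ^ j) hj b
  calc π x = (π ^ (1:ℤ)) x := by rw [zpow_one]
    _ = (π ^ (a * (p:ℤ) + b * j)) x := by rw [hab]
    _ = (π ^ (a * (p:ℤ))) ((π ^ (b * j)) x) := by rw [zpow_add, Equiv.Perm.mul_apply]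
    _ = x := by rw [e2, e1, Equiv.Perm.one_apply]

lemma myPowMod {X : Type} (π : Equiv.Perm X) {p : ℕ} (hπ : π ^ p = 1) (k : ℕ) :
    π ^ k = π ^ (k % p) := by
  conv_lhs => rw [← Nat.mod_add_div k p]
  rw [pow_add, pow_mul, hπ, one_pow, mul_one]

lemma myPowCast {X : Type} (π : Equiv.Perm X) {p : ℕ} (hπ : π ^ p = 1) {k k' : ℕ}
    (h : (k : ZMod p) = (k' : ZMod p)) : π ^ k = π ^ k' := by
  rw [ZMod.natCast_eq_natCast_iff] at h
  rw [myPowMod π hπ k, myPowMod π hπ k', h]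

/-- The restriction of a permutation to its moved points. -/
def movedPerm {X : Type} (π : Equiv.Perm X) : Equiv.Perm {x : X // π x ≠ x} :=
  π.subtypePerm (fun x => (not_congr (π.apply_eq_iff_eq (x := π x) (y := x))))

lemma movedPerm_val {X : Type} (π : Equiv.Perm X) (m : {x : X // π x ≠ x}) :
    (movedPerm π m).val = π m.val := rfl

lemma movedPerm_pow_val {X : Type} (π : Equiv.Perm X) (n : ℕ) :
    ∀ m : {x : X // π x ≠ x}, ((movedPerm π ^ n) m).val = (π ^ n) m.val := by
  induction n with
  | zero => intro m; simp
  | succ n ih =>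
      intro m
      rw [pow_succ', pow_succ', Equiv.Perm.mul_apply, Equiv.Perm.mul_apply,
        movedPerm_val, ih m]

lemma normal_form {X : Type} [Countable X] {p : ℕ} (hp : p.Prime) (π : Equiv.Perm X)
    (hπ : π ^ p = 1) (hm : Infinite {x : X // π x ≠ x}) :
    ∃ E : {x : X // π x ≠ x} ≃ ℕ × ZMod p,
      ∀ m : {x : X // π x ≠ x}, E (movedPerm π m) = ((E m).1, (E m).2 + 1) := by
  classical
  haveI : NeZero p := ⟨hp.pos.ne'⟩
  set M := {x : X // π x ≠ x} with hM
  have hmoved : ∀ m : M, π m.val ≠ m.val := fun m => m.2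
  -- uniqueness of discrete log mod p
  have huniq : ∀ (y : X), π y ≠ y → ∀ k k' : ℕ, (π ^ k) y = (π ^ k') y →
      (k : ZMod p) = (k' : ZMod p) := by
    intro y hy k k' hkk
    have hz : π ((π ^ k') y) ≠ (π ^ k') y := by
      intro hcon
      apply hy
      have h2 : π ((π ^ k') y) = (π ^ k') (π y) := by
        have hc : π * (π ^ k') = (π ^ k') * π := by
          rw [← pow_succ', ← pow_succ]
        calc π ((π ^ k') y) = (π * (π ^ k')) y := rfl
          _ = ((π ^ k') * π) y := by rw [hc]
          _ = (π ^ k') (π y) := rfl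
      rw [h2] at hcon
      exact (π ^ k').injective hcon
    have hfix : (π ^ ((k : ℤ) - (k' : ℤ))) ((π ^ k') y) = (π ^ k') y := by
      have h3 : (π ^ ((k:ℤ) - (k':ℤ))) ((π ^ ((k':ℤ))) y) = (π ^ ((k:ℤ))) y := by
        rw [← Equiv.Perm.mul_apply, ← zpow_add, sub_add_cancel]
      rw [zpow_natCast] at h3
      rw [h3, zpow_natCast, hkk]
    have hdvd : (p : ℤ) ∣ ((k : ℤ) - (k' : ℤ)) := myDvdOfFix hp π hπ hz hfix
    have h4 : (((k : ℤ) - (k' : ℤ) : ℤ) : ZMod p) = 0 :=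
      (ZMod.intCast_zmod_eq_zero_iff_dvd _ _).mpr hdvd
    push_cast at h4
    linear_combination h4
  -- the orbit setoid
  let s : Setoid M := ⟨fun m m' => ∃ k : ℕ, (π ^ k) m.val = m'.val, by
    constructor
    · intro m; exact ⟨0, by simp⟩
    · rintro m m' ⟨k, hk⟩
      refine ⟨k * (p - 1), ?_⟩
      rw [← hk, ← Equiv.Perm.mul_apply, ← pow_add]
      have harith : k * (p - 1) + k = k * p := by
        cases p with
        | zero => exact absurd rfl hp.pos.ne'
        | succ q => rw [Nat.succ_sub_one]; ring
      rw [harith, mul_comm, pow_mul, hπ, one_pow, Equiv.Perm.one_apply]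
    · rintro m m' m'' ⟨k, hk⟩ ⟨k', hk'⟩
      exact ⟨k' + k, by rw [pow_add, Equiv.Perm.mul_apply, hk, hk']⟩⟩
  let Ω := Quotient s
  have hrep : ∀ m : M, ∃ k : ℕ, (π ^ k) ((Quotient.mk s m).out).val = m.val := by
    intro m
    exact Quotient.exact (Quotient.out_eq (Quotient.mk s m))
  let ind : M → ZMod p := fun m => ((Classical.choose (hrep m) : ℕ) : ZMod p)
  have hchar : ∀ (m : M) (k : ℕ),
      (π ^ k) ((Quotient.mk s m).out).val = m.val → ind m = (k : ZMod p) := by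
    intro m k hk
    exact huniq _ (hmoved _) _ _ (by rw [Classical.choose_spec (hrep m), hk])
  -- toFun and bijectivity
  let T : M → Ω × ZMod p := fun m => (Quotient.mk s m, ind m)
  have hinj : Function.Injective T := by
    intro m m' hT
    have h1 : Quotient.mk s m = Quotient.mk s m' := (Prod.ext_iff.mp hT).1
    have h2 : ind m = ind m' := (Prod.ext_iff.mp hT).2
    obtain ⟨k, hk⟩ := hrep m
    obtain ⟨k', hk'⟩ := hrep m'
    have hout : (Quotient.mk s m).out = (Quotient.mk s m').out := by rw [h1]
    have hq : (k : ZMod p) = (k' : ZMod p) := by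
      rw [← hchar m k hk, h2, hchar m' k' hk']
    have hpow : π ^ k = π ^ k' := myPowCast π hπ hq
    apply Subtype.ext
    rw [← hk, ← hk', hout, hpow]
  have hsurj : Function.Surjective T := by
    rintro ⟨ω, j⟩
    refine ⟨(movedPerm π ^ j.val) ω.out, ?_⟩
    have hval : ((movedPerm π ^ j.val) ω.out).val = (π ^ j.val) ω.out.val :=
      movedPerm_pow_val π j.val ω.out
    have horb : Quotient.mk s ((movedPerm π ^ j.val) ω.out) = ω := by
      have hr : Setoid.r ω.out ((movedPerm π ^ j.val) ω.out) := ⟨j.val, hval.symm⟩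
      calc Quotient.mk s ((movedPerm π ^ j.val) ω.out)
          = Quotient.mk s ω.out := (Quotient.sound hr).symm
        _ = ω := Quotient.out_eq ω
    have hout : (Quotient.mk s ((movedPerm π ^ j.val) ω.out)).out = ω.out := by rw [horb]
    have hι : ind ((movedPerm π ^ j.val) ω.out) = j := by
      rw [hchar _ j.val (by rw [hout, hval]), ZMod.natCast_rightInverse j]
    exact Prod.ext horb hι
  let E₀ : M ≃ Ω × ZMod p := Equiv.ofBijective T ⟨hinj, hsurj⟩
  have hE₀ : ∀ m : M, E₀ (movedPerm π m) = ((E₀ m).1, (E₀ m).2 + 1) := by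
    intro m
    have horb : Quotient.mk s (movedPerm π m) = Quotient.mk s m := by
      refine (Quotient.sound ?_).symm
      exact ⟨1, by simpa using (movedPerm_val π m).symm⟩
    have hout : (Quotient.mk s (movedPerm π m)).out = (Quotient.mk s m).out := by rw [horb]
    obtain ⟨k, hk⟩ := hrep m
    have hι : ind (movedPerm π m) = ind m + 1 := by
      have e3 : (π ^ (k + 1)) ((Quotient.mk s (movedPerm π m)).out).val
          = (movedPerm π m).val := by
        rw [hout, pow_succ', Equiv.Perm.mul_apply, hk, movedPerm_val]
      rw [hchar _ (k+1) e3, hchar m k hk]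
      push_cast
      ring
    show T (movedPerm π m) = ((T m).1, (T m).2 + 1)
    exact Prod.ext horb hι
  -- Ω is countably infinite
  haveI : Countable Ω := Quotient.countable
  haveI : Infinite Ω := by
    constructor
    intro hfin
    haveI := hfin
    haveI : Finite (Ω × ZMod p) := inferInstance
    haveI : Finite M := Finite.of_equiv _ E₀.symm
    exact absurd ‹Finite M› hm.not_finite
  obtain ⟨d⟩ := nonempty_denumerable Ω
  refine ⟨E₀.trans (Equiv.prodCongr (Denumerable.eqv Ω) (Equiv.refl _)), ?_⟩
  intro m
  simp only [Equiv.trans_apply, Equiv.prodCongr_apply, hE₀ m]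
  rfl

lemma myExistsConj {X Y : Type} [Countable X] [Countable Y] {p : ℕ} (hp : p.Prime)
    (π : Equiv.Perm X) (π' : Equiv.Perm Y) (hπ : π ^ p = 1) (hπ' : π' ^ p = 1)
    (hfix : Nonempty ({x : X // π x = x} ≃ {y : Y // π' y = y}))
    (hm : Infinite {x : X // π x ≠ x}) (hm' : Infinite {y : Y // π' y ≠ y}) :
    ∃ e : X ≃ Y, ∀ x, e (π x) = π' (e x) := by
  classical
  obtain ⟨E, hE⟩ := normal_form hp π hπ hm
  obtain ⟨E', hE'⟩ := normal_form hp π' hπ' hm'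
  obtain ⟨F⟩ := hfix
  let G : {x : X // π x ≠ x} ≃ {y : Y // π' y ≠ y} := E.trans E'.symm
  refine ⟨((Equiv.sumCompl (fun x => π x = x)).symm.trans
      (Equiv.sumCongr F G)).trans (Equiv.sumCompl (fun y => π' y = y)), fun x => ?_⟩
  simp only [Equiv.trans_apply]
  by_cases hx : π x = x
  · rw [hx, Equiv.sumCompl_symm_apply_of_pos (p := fun x => π x = x) (a := x) hx]
    simp only [Equiv.sumCongr_apply, Sum.map_inl, Equiv.sumCompl_apply_inl]
    exact (F ⟨x, hx⟩).2.symm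
  · have hx' : π (π x) ≠ π x := fun hcon => hx (π.injective hcon)
    rw [Equiv.sumCompl_symm_apply_of_neg (p := fun x => π x = x) (a := x) hx,
      Equiv.sumCompl_symm_apply_of_neg (p := fun x => π x = x) (a := π x) hx']
    simp only [Equiv.sumCongr_apply, Sum.map_inr, Equiv.sumCompl_apply_inr]
    have hmm : (⟨π x, hx'⟩ : {x : X // π x ≠ x}) = movedPerm π ⟨x, hx⟩ := rfl
    show (E'.symm (E ⟨π x, hx'⟩)).val = π' ((E'.symm (E ⟨x, hx⟩)).val)
    rw [hmm, hE]
    set m' := E'.symm (E ⟨x, hx⟩) with hm'def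
    have h1 : E ⟨x, hx⟩ = E' m' := (E'.apply_symm_apply _).symm
    rw [h1]
    have h2 : ((E' m').1, (E' m').2 + 1) = E' (movedPerm π' m') := (hE' m').symm
    rw [h2, Equiv.symm_apply_apply]
    exact movedPerm_val π' m'

lemma prodCongr_pow_apply {A C : Type} (u : Equiv.Perm A) (v : Equiv.Perm C) (n : ℕ)
    (x : A × C) : ((Equiv.prodCongr u v) ^ n) x = ((u ^ n) x.1, (v ^ n) x.2) := by
  induction n with
  | zero => simp
  | succ n ih =>
      rw [pow_succ', pow_succ', pow_succ', Equiv.Perm.mul_apply, Equiv.Perm.mul_apply,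
        Equiv.Perm.mul_apply, ih]
      rfl

lemma sumCongr_pow_apply_inl {α β : Type} (u : Equiv.Perm α) (v : Equiv.Perm β) (n : ℕ)
    (a : α) : ((Equiv.sumCongr u v) ^ n) (Sum.inl a) = Sum.inl ((u ^ n) a) := by
  induction n with
  | zero => simp
  | succ n ih =>
      rw [pow_succ', pow_succ', Equiv.Perm.mul_apply, Equiv.Perm.mul_apply, ih]
      rfl

lemma sumCongr_pow_apply_inr {α β : Type} (u : Equiv.Perm α) (v : Equiv.Perm β) (n : ℕ)
    (b : β) : ((Equiv.sumCongr u v) ^ n) (Sum.inr b) = Sum.inr ((v ^ n) b) := by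
  induction n with
  | zero => simp
  | succ n ih =>
      rw [pow_succ', pow_succ', Equiv.Perm.mul_apply, Equiv.Perm.mul_apply, ih]
      rfl


theorem nontrivial_not_fully_cancelling {C : Type} [Finite C] [Nonempty C]
    (Γ : Subgroup (Equiv.Perm C)) (hΓ : ∃ γ ∈ Γ, γ ≠ 1) :
    ∃ (A B : Type) (f : A × C ≃ B × C), ∀ h : A ≃ B, ¬ IsEquivQuotient Γ f h := by
  classical
  obtain ⟨γ, hγΓ, hγ1⟩ := hΓ
  -- pass to an element of prime order
  set n := orderOf γ with hn
  have hn0 : n ≠ 0 := (orderOf_pos γ).ne'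
  have hn1 : n ≠ 1 := fun h => hγ1 (orderOf_eq_one_iff.mp h)
  set q := n.minFac with hq
  have hp : q.Prime := Nat.minFac_prime hn1
  set δ : Equiv.Perm C := γ ^ (n / q) with hδ
  have horder : orderOf δ = q := by
    rw [hδ, orderOf_pow, ← hn, Nat.gcd_eq_right (Nat.div_dvd_of_dvd (Nat.minFac_dvd n)),
      Nat.div_div_self (Nat.minFac_dvd n) hn0]
  have hδΓ : δ ∈ Γ := Subgroup.pow_mem Γ hγΓ _
  have hδ1 : δ ≠ 1 := by
    intro h
    rw [h, orderOf_one] at horder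
    exact hp.one_lt.ne horder
  have hδp : δ ^ q = 1 := by rw [← horder]; exact pow_orderOf_eq_one δ
  obtain ⟨c₀, hc₀⟩ : ∃ c, δ c ≠ c := by
    by_contra hall
    push_neg at hall
    exact hδ1 (Equiv.ext fun c => hall c)
  -- the two permutations
  set M := {c : C // δ c ≠ c} with hMdef
  set B := ℕ ⊕ M with hBdef
  set β : Equiv.Perm B := Equiv.sumCongr (1 : Equiv.Perm ℕ) (movedPerm δ) with hβdef
  set π : Equiv.Perm (ℕ × C) := Equiv.prodCongr (1 : Equiv.Perm ℕ) δ with hπdef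
  set π' : Equiv.Perm (B × C) := Equiv.prodCongr β δ with hπ'def
  have hβq : β ^ q = 1 := by
    apply Equiv.ext
    intro b
    cases b with
    | inl a => rw [hβdef, sumCongr_pow_apply_inl, one_pow]; rfl
    | inr m =>
        rw [hβdef, sumCongr_pow_apply_inr]
        have : ((movedPerm δ ^ q) m) = m := by
          apply Subtype.ext
          rw [movedPerm_pow_val, hδp]
          rfl
        rw [this]
        rfl
  have hπq : π ^ q = 1 := by
    apply Equiv.ext
    intro x
    rw [hπdef, prodCongr_pow_apply, one_pow, hδp]
    rfl
  have hπ'q : π' ^ q = 1 := by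
    apply Equiv.ext
    intro x
    rw [hπ'def, prodCongr_pow_apply, hβq, hδp]
    rfl
  -- fixed points are in bijection
  have hfix : Nonempty ({x : ℕ × C // π x = x} ≃ {y : B × C // π' y = y}) := by
    refine ⟨Equiv.ofBijective
      (fun z => ⟨(Sum.inl z.val.1, z.val.2), ?_⟩) ⟨?_, ?_⟩⟩
    · have h2 : δ z.val.2 = z.val.2 := congrArg Prod.snd z.2
      exact Prod.ext rfl h2
    · intro z z' hzz
      have e1 : ((Sum.inl z.val.1 : B), z.val.2) = (Sum.inl z'.val.1, z'.val.2) :=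
        congrArg Subtype.val hzz
      have e2 : z.val.1 = z'.val.1 := by
        have := congrArg Prod.fst e1
        exact Sum.inl.inj this
      have e3 := congrArg Prod.snd e1
      exact Subtype.ext (Prod.ext e2 e3)
    · rintro ⟨⟨b, c⟩, hw⟩
      cases b with
      | inl m =>
          have h2 : δ c = c := congrArg Prod.snd hw
          exact ⟨⟨(m, c), Prod.ext rfl h2⟩, Subtype.ext rfl⟩
      | inr m =>
          exfalso
          have e1 : (Sum.inr (movedPerm δ m) : B) = Sum.inr m := congrArg Prod.fst hw
          have e2 : movedPerm δ m = m := Sum.inr.inj e1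
          exact m.2 (congrArg Subtype.val e2)
  -- moved parts are infinite
  have hmX : Infinite {x : ℕ × C // π x ≠ x} := by
    refine Infinite.of_injective
      (fun k : ℕ => ⟨(k, c₀), fun hcon => hc₀ (congrArg Prod.snd hcon)⟩) ?_
    intro a b hab
    exact congrArg (fun z => z.val.1) hab
  have hmY : Infinite {y : B × C // π' y ≠ y} := by
    refine Infinite.of_injective
      (fun k : ℕ => ⟨((Sum.inl k : B), c₀), fun hcon => hc₀ (congrArg Prod.snd hcon)⟩) ?_
    intro a b hab
    have := congrArg (fun z => z.val.1) hab
    exact Sum.inl.inj this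
  obtain ⟨e, he⟩ := myExistsConj hp π π' hπq hπ'q hfix hmX hmY
  refine ⟨ℕ, B, e, ?_⟩
  intro h hquot
  -- the symmetry (1, β, δ) fixes e
  have hsym : transform e (1 : Equiv.Perm ℕ) β δ = e := by
    apply Equiv.ext
    intro x
    show (Equiv.prodCongr β δ) (e ((Equiv.prodCongr (1 : Equiv.Perm ℕ) δ).symm x)) = e x
    have hy : π ((Equiv.prodCongr (1 : Equiv.Perm ℕ) δ).symm x) = x := by
      rw [hπdef]
      exact (Equiv.prodCongr (1 : Equiv.Perm ℕ) δ).apply_symm_apply x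
    calc (Equiv.prodCongr β δ) (e ((Equiv.prodCongr (1 : Equiv.Perm ℕ) δ).symm x))
        = e (π ((Equiv.prodCongr (1 : Equiv.Perm ℕ) δ).symm x)) := by
          rw [he ((Equiv.prodCongr (1 : Equiv.Perm ℕ) δ).symm x), hπ'def]
      _ = e x := by rw [hy]
  have h1 := hquot (1 : Equiv.Perm ℕ) β δ hδΓ hsym
  have h2 : ∀ a : ℕ, β (h a) = h a := by
    intro a
    exact Equiv.ext_iff.mp h1 a
  have h4 : β (Sum.inr (⟨c₀, hc₀⟩ : M)) = Sum.inr (⟨c₀, hc₀⟩ : M) := by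
    have := h2 (h.symm (Sum.inr (⟨c₀, hc₀⟩ : M)))
    rwa [Equiv.apply_symm_apply] at this
  have h5 : movedPerm δ ⟨c₀, hc₀⟩ = (⟨c₀, hc₀⟩ : M) := Sum.inr.inj h4
  exact hc₀ (congrArg Subtype.val h5)
end

section
/- Let C be a nonempty finite set. The trivial subgroup {id} of the symmetric group S(C) is fully cancelling: for all sets A and B, every bijection f : A × C → B × C has an {id}-equivariant quotient bijection h : A → B. -/
section AuxiliaryLemmas

open Function

private theorem csb_rel {X Y : Type} {R : X → Y → Prop} {Φ : X → Y} {Ψ : Y → X}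
    (hΦ : Injective Φ) (hΨ : Injective Ψ)
    (hRΦ : ∀ x, R x (Φ x)) (hRΨ : ∀ y, R (Ψ y) y) :
    ∃ e : X ≃ Y, ∀ x, R x (e x) := by
  classical
  cases isEmpty_or_nonempty Y with
  | inl hY =>
      haveI : IsEmpty X := ⟨fun x => hY.false (Φ x)⟩
      exact ⟨Equiv.equivOfIsEmpty X Y, fun x => (IsEmpty.false x).elim⟩
  | inr hY =>
      set F : Set X →o Set X :=
        ⟨fun s => (Ψ '' (Φ '' s)ᶜ)ᶜ, fun s t hst =>
          Set.compl_subset_compl.2 (Set.image_mono (Set.compl_subset_compl.2 (Set.image_mono hst)))⟩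
        with hF
      set S : Set X := OrderHom.lfp F with hSdef
      have hfix : (Ψ '' (Φ '' S)ᶜ)ᶜ = S := F.map_lfp
      have hcompl : Sᶜ = Ψ '' (Φ '' S)ᶜ := by
        conv_lhs => rw [← hfix]
        rw [compl_compl]
      have hx' : ∀ x, x ∉ S → Ψ (invFun Ψ x) = x ∧ invFun Ψ x ∉ Φ '' S := by
        intro x hx
        have hmem : x ∈ Ψ '' (Φ '' S)ᶜ := by rw [← hcompl]; exact hx
        obtain ⟨y, hy, rfl⟩ := hmem
        have h1 : invFun Ψ (Ψ y) = y := leftInverse_invFun hΨ y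
        rw [h1]; exact ⟨rfl, hy⟩
      set h : X → Y := fun x => if x ∈ S then Φ x else invFun Ψ x with hh
      have hinS : ∀ x, x ∈ S → h x = Φ x := fun x hx => if_pos hx
      have hnotS : ∀ x, x ∉ S → Ψ (h x) = x ∧ h x ∉ Φ '' S := by
        intro x hx
        have := hx' x hx
        rw [hh]; simp only [if_neg hx]; exact this
      have hinj : Injective h := by
        intro a b hab
        by_cases ha : a ∈ S <;> by_cases hb : b ∈ S
        · exact hΦ (by rw [← hinS a ha, ← hinS b hb, hab])
        · exact absurd (show h b ∈ Φ '' S by rw [← hab, hinS a ha]; exact Set.mem_image_of_mem Φ ha) (hnotS b hb).2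
        · exact absurd (show h a ∈ Φ '' S by rw [hab, hinS b hb]; exact Set.mem_image_of_mem Φ hb) (hnotS a ha).2
        · rw [← (hnotS a ha).1, ← (hnotS b hb).1, hab]
      have hsurj : Surjective h := by
        intro y
        by_cases hy : Ψ y ∈ S
        · have hyim : y ∈ Φ '' S := by
            by_contra hc
            have : Ψ y ∈ Sᶜ := by rw [hcompl]; exact ⟨y, hc, rfl⟩
            exact this hy
          obtain ⟨x, hx, rfl⟩ := hyim
          exact ⟨x, hinS x hx⟩
        · refine ⟨Ψ y, ?_⟩
          have : h (Ψ y) = invFun Ψ (Ψ y) := if_neg hy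
          rw [this, leftInverse_invFun hΨ y]
      refine ⟨Equiv.ofBijective h ⟨hinj, hsurj⟩, fun x => ?_⟩
      have hcoe : Equiv.ofBijective h ⟨hinj, hsurj⟩ x = h x := rfl
      rw [hcoe]
      by_cases hx : x ∈ S
      · rw [hinS x hx]; exact hRΦ x
      · have := (hnotS x hx).1
        have hr := hRΨ (h x)
        rw [this] at hr; exact hr

private theorem hall_aux {X Y C : Type} [Fintype C] [Nonempty C] [DecidableEq Y]
    (u : X × C ≃ Y × C) (S : Finset X) :
    S.card ≤ (S.biUnion (fun q => Finset.image (fun c => (u (q, c)).1) Finset.univ)).card := by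
  classical
  have hn : 0 < Fintype.card C := Fintype.card_pos
  set T := S.biUnion (fun q => Finset.image (fun c => (u (q, c)).1) Finset.univ) with hT
  have hmaps : ∀ x ∈ S ×ˢ (Finset.univ : Finset C), u x ∈ T ×ˢ (Finset.univ : Finset C) := by
    rintro ⟨q, c⟩ hx
    rw [Finset.mem_product] at hx ⊢
    refine ⟨?_, Finset.mem_univ _⟩
    exact Finset.mem_biUnion.2 ⟨q, hx.1, Finset.mem_image.2 ⟨c, Finset.mem_univ c, rfl⟩⟩
  have hcard := Finset.card_le_card_of_injOn (fun x => u x) hmaps (u.injective.injOn)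
  rw [Finset.card_product, Finset.card_product, Finset.card_univ] at hcard
  exact Nat.le_of_mul_le_mul_right hcard hn

private theorem matching_of_equiv {X Y C : Type} [Finite C] [Nonempty C]
    (u : X × C ≃ Y × C) : ∃ e : X ≃ Y, ∀ x, ∃ c, (u (x, c)).1 = e x := by
  classical
  haveI := Fintype.ofFinite C
  obtain ⟨Φ, hΦi, hΦm⟩ := (Finset.all_card_le_biUnion_card_iff_exists_injective
      (fun q => Finset.image (fun c => (u (q, c)).1) Finset.univ)).1 (hall_aux u)
  obtain ⟨Ψ, hΨi, hΨm⟩ := (Finset.all_card_le_biUnion_card_iff_exists_injective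
      (fun p => Finset.image (fun c => (u.symm (p, c)).1) Finset.univ)).1 (hall_aux u.symm)
  have hRΦ : ∀ x, ∃ c, (u (x, c)).1 = Φ x := by
    intro x
    obtain ⟨c, _, hc⟩ := Finset.mem_image.1 (hΦm x)
    exact ⟨c, hc⟩
  have hRΨ : ∀ y, ∃ c, (u (Ψ y, c)).1 = y := by
    intro y
    obtain ⟨c, _, hc⟩ := Finset.mem_image.1 (hΨm y)
    refine ⟨(u.symm (y, c)).2, ?_⟩
    have h2 : u ((u.symm (y, c)).1, (u.symm (y, c)).2) = (y, c) := by
      rw [show ((u.symm (y, c)).1, (u.symm (y, c)).2) = u.symm (y, c) from rfl]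
      exact u.apply_symm_apply _
    rw [hc] at h2
    rw [h2]
  exact csb_rel (R := fun x y => ∃ c, (u (x, c)).1 = y) hΦi hΨi hRΦ hRΨ

theorem Equiv.Perm.inv_apply_self {X : Type} (e : Equiv.Perm X) (x : X) : e⁻¹ (e x) = x :=
  e.symm_apply_apply x

theorem Equiv.Perm.apply_inv_self {X : Type} (e : Equiv.Perm X) (x : X) : e (e⁻¹ x) = x :=
  e.apply_symm_apply x

end AuxiliaryLemmas

theorem trivial_fully_cancelling {C : Type} [Finite C] [Nonempty C] :
    FullyCancelling C (⊥ : Subgroup (Equiv.Perm C)) := by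
  classical
  intro A B f
  -- pointwise characterization of invariance
  have tapply : ∀ (α : Equiv.Perm A) (β : Equiv.Perm B) (a : A) (c : C),
      transform f α β 1 (a, c) = (β (f (α⁻¹ a, c)).1, (f (α⁻¹ a, c)).2) := by
    intro α β a c
    simp [transform, Prod.map, Equiv.Perm.inv_def, Equiv.Perm.one_symm]
  have key : ∀ (α : Equiv.Perm A) (β : Equiv.Perm B),
      transform f α β 1 = f ↔ ∀ a c, f (α a, c) = (β (f (a, c)).1, (f (a, c)).2) := by
    intro α β
    constructor
    · intro h a c
      have h1 := DFunLike.congr_fun h (α a, c)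
      rw [tapply] at h1
      rw [Equiv.Perm.inv_apply_self] at h1
      exact h1.symm
    · intro h
      apply Equiv.ext
      rintro ⟨a, c⟩
      rw [tapply]
      have := h (α⁻¹ a) c
      rw [Equiv.Perm.apply_inv_self] at this
      exact this.symm
  have GRone : transform f 1 1 1 = f := by
    rw [key]; intro a c; simp
  have GRmul : ∀ {α α' : Equiv.Perm A} {β β' : Equiv.Perm B},
      transform f α β 1 = f → transform f α' β' 1 = f →
      transform f (α * α') (β * β') 1 = f := by
    intro α α' β β' h h'
    rw [key]; intro a c
    have h1 := (key α β).1 h (α' a) c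
    have h2 := (key α' β').1 h' a c
    rw [Equiv.Perm.mul_apply, h1, h2]
    simp [Equiv.Perm.mul_apply]
  have GRinv : ∀ {α : Equiv.Perm A} {β : Equiv.Perm B},
      transform f α β 1 = f → transform f α⁻¹ β⁻¹ 1 = f := by
    intro α β h
    rw [key]; intro a c
    have h1 := (key α β).1 h (α⁻¹ a) c
    rw [Equiv.Perm.apply_inv_self] at h1
    rw [h1]
    simp
  -- setoids of orbits
  letI sA : Setoid A :=
    ⟨fun a a' => ∃ α β, transform f α β 1 = f ∧ α a = a',
      ⟨fun a => ⟨1, 1, GRone, rfl⟩,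
       fun {a a'} => by
         rintro ⟨α, β, hG, ha⟩
         exact ⟨α⁻¹, β⁻¹, GRinv hG, by rw [← ha, Equiv.Perm.inv_apply_self]⟩,
       fun {a b c} => by
         rintro ⟨α, β, hG, ha⟩ ⟨α', β', hG', hb⟩
         exact ⟨α' * α, β' * β, GRmul hG' hG, by rw [Equiv.Perm.mul_apply, ha, hb]⟩⟩⟩
  letI sB : Setoid B :=
    ⟨fun b b' => ∃ α β, transform f α β 1 = f ∧ β b = b',
      ⟨fun b => ⟨1, 1, GRone, rfl⟩,
       fun {b b'} => by
         rintro ⟨α, β, hG, hb⟩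
         exact ⟨α⁻¹, β⁻¹, GRinv hG, by rw [← hb, Equiv.Perm.inv_apply_self]⟩,
       fun {a b c} => by
         rintro ⟨α, β, hG, ha⟩ ⟨α', β', hG', hb⟩
         exact ⟨α' * α, β' * β, GRmul hG' hG, by rw [Equiv.Perm.mul_apply, ha, hb]⟩⟩⟩
  -- the induced bijection on orbit spaces times C
  let E : Quotient sA × C → Quotient sB × C :=
    fun x => (Quotient.mk sB (f (x.1.out, x.2)).1, (f (x.1.out, x.2)).2)
  have Einj : Function.Injective E := by
    rintro ⟨q, c⟩ ⟨q', c'⟩ hE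
    have h1 : Quotient.mk sB (f (q.out, c)).1 = Quotient.mk sB (f (q'.out, c')).1 :=
      congrArg Prod.fst hE
    have h2 : (f (q.out, c)).2 = (f (q'.out, c')).2 :=
      congrArg (Prod.snd : Quotient sB × C → C) hE
    obtain ⟨α, β, hG, hb⟩ := Quotient.exact h1
    have h3 := (key α β).1 hG q.out c
    have h4 : f (α q.out, c) = f (q'.out, c') := by rw [h3, hb, h2]
    have h5 := f.injective h4
    have hc : c = c' := congrArg Prod.snd h5
    have ha : α q.out = q'.out := congrArg Prod.fst h5
    have hq : q = q' := by
      rw [← Quotient.out_eq q, ← Quotient.out_eq q']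
      exact Quotient.sound ⟨α, β, hG, ha⟩
    rw [hq, hc]
  have Esurj : Function.Surjective E := by
    rintro ⟨p, c₀⟩
    set x := f.symm (p.out, c₀) with hxdef
    refine ⟨(Quotient.mk sA x.1, x.2), ?_⟩
    obtain ⟨α, β, hG, hα⟩ := @Quotient.mk_out A sA x.1
    have h3 := (key α β).1 hG ((Quotient.mk sA x.1).out) x.2
    rw [hα] at h3
    have hfx : f (x.1, x.2) = (p.out, c₀) := by
      rw [show ((x.1 : A), (x.2 : C)) = x from rfl, hxdef]
      exact f.apply_symm_apply _
    rw [hfx] at h3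
    have hb : β (f ((Quotient.mk sA x.1).out, x.2)).1 = p.out := (congrArg Prod.fst h3).symm
    have hc : (f ((Quotient.mk sA x.1).out, x.2)).2 = c₀ := (congrArg Prod.snd h3).symm
    show (Quotient.mk sB (f ((Quotient.mk sA x.1).out, x.2)).1,
        (f ((Quotient.mk sA x.1).out, x.2)).2) = (p, c₀)
    rw [hc]
    have hp : Quotient.mk sB (f ((Quotient.mk sA x.1).out, x.2)).1 = p := by
      rw [show p = Quotient.mk sB p.out from (Quotient.out_eq p).symm]
      exact Quotient.sound ⟨α, β, hG, hb⟩
    rw [hp]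
  let Ee : Quotient sA × C ≃ Quotient sB × C := Equiv.ofBijective E ⟨Einj, Esurj⟩
  obtain ⟨e, he⟩ := matching_of_equiv Ee
  choose cq hcq using he
  let bq : Quotient sA → B := fun q => (f (q.out, cq q)).1
  have hbq : ∀ q, Quotient.mk sB (bq q) = e q := fun q => congrArg id (hcq q)
  -- one-step stabilizer transfer
  have fixB : ∀ {α : Equiv.Perm A} {β : Equiv.Perm B}, transform f α β 1 = f →
      ∀ q : Quotient sA, α q.out = q.out → β (bq q) = bq q := by
    intro α β hG q hfix
    have h3 := (key α β).1 hG q.out (cq q)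
    rw [hfix] at h3
    exact (congrArg Prod.fst h3).symm
  have fixA : ∀ {α : Equiv.Perm A} {β : Equiv.Perm B}, transform f α β 1 = f →
      ∀ q : Quotient sA, β (bq q) = bq q → α q.out = q.out := by
    intro α β hG q hfix
    have hfix' : β (f (q.out, cq q)).1 = (f (q.out, cq q)).1 := hfix
    have h3 := (key α β).1 hG q.out (cq q)
    rw [hfix'] at h3
    have h4 : f (α q.out, cq q) = f (q.out, cq q) := by rw [h3]
    exact congrArg Prod.fst (f.injective h4)
  have welldef : ∀ {α α' : Equiv.Perm A} {β β' : Equiv.Perm B},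
      transform f α β 1 = f → transform f α' β' 1 = f →
      ∀ q : Quotient sA, α q.out = α' q.out → β (bq q) = β' (bq q) := by
    intro α α' β β' hG hG' q hq
    have hmul := GRmul (GRinv hG') hG
    have hfix : (α'⁻¹ * α) q.out = q.out := by
      rw [Equiv.Perm.mul_apply, hq, Equiv.Perm.inv_apply_self]
    have h5 := fixB hmul q hfix
    rw [Equiv.Perm.mul_apply] at h5
    calc β (bq q) = β' (β'⁻¹ (β (bq q))) := (Equiv.Perm.apply_inv_self β' _).symm
      _ = β' (bq q) := by rw [h5]
  have welldef' : ∀ {α α' : Equiv.Perm A} {β β' : Equiv.Perm B},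
      transform f α β 1 = f → transform f α' β' 1 = f →
      ∀ q : Quotient sA, β (bq q) = β' (bq q) → α q.out = α' q.out := by
    intro α α' β β' hG hG' q hq
    have hmul := GRmul (GRinv hG') hG
    have hfix : (β'⁻¹ * β) (bq q) = bq q := by
      rw [Equiv.Perm.mul_apply, hq, Equiv.Perm.inv_apply_self]
    have h5 := fixA hmul q hfix
    rw [Equiv.Perm.mul_apply] at h5
    calc α q.out = α' (α'⁻¹ (α q.out)) := (Equiv.Perm.apply_inv_self α' _).symm
      _ = α' q.out := by rw [h5]
  -- define h by equivariant transport
  have rel : ∀ a : A, ∃ α β, transform f α β 1 = f ∧ α ((Quotient.mk sA a).out) = a :=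
    fun a => @Quotient.mk_out A sA a
  choose αa βa hGa hαa using rel
  let h : A → B := fun a => βa a (bq (Quotient.mk sA a))
  have mkA : ∀ {α : Equiv.Perm A} {β : Equiv.Perm B}, transform f α β 1 = f →
      ∀ a, Quotient.mk sA (α a) = Quotient.mk sA a := by
    intro α β hG a
    refine Eq.symm (Quotient.sound ?_)
    exact ⟨α, β, hG, rfl⟩
  have mkB : ∀ {α : Equiv.Perm A} {β : Equiv.Perm B}, transform f α β 1 = f →
      ∀ b, Quotient.mk sB (β b) = Quotient.mk sB b := by
    intro α β hG b
    refine Eq.symm (Quotient.sound ?_)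
    exact ⟨α, β, hG, rfl⟩
  have hmkh : ∀ a, Quotient.mk sB (h a) = e (Quotient.mk sA a) := by
    intro a
    calc Quotient.mk sB (h a) = Quotient.mk sB (bq (Quotient.mk sA a)) := mkB (hGa a) _
      _ = e (Quotient.mk sA a) := hbq _
  have heq : ∀ {α : Equiv.Perm A} {β : Equiv.Perm B}, transform f α β 1 = f →
      ∀ a, h (α a) = β (h a) := by
    intro α β hG a
    have hq : Quotient.mk sA (α a) = Quotient.mk sA a := mkA hG a
    show βa (α a) (bq (Quotient.mk sA (α a))) = β (βa a (bq (Quotient.mk sA a)))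
    rw [hq]
    have h1 : αa (α a) ((Quotient.mk sA a).out) = α a := by
      have := hαa (α a); rw [hq] at this; exact this
    have h2 : (α * αa a) ((Quotient.mk sA a).out) = α a := by
      rw [Equiv.Perm.mul_apply, hαa a]
    have h3 := welldef (hGa (α a)) (GRmul hG (hGa a)) (Quotient.mk sA a) (by rw [h1, h2])
    rw [h3, Equiv.Perm.mul_apply]
  have hinj : Function.Injective h := by
    intro a a' hab
    have hq : Quotient.mk sA a = Quotient.mk sA a' :=
      e.injective (by rw [← hmkh a, ← hmkh a', hab])
    have hab' : βa a (bq (Quotient.mk sA a)) = βa a' (bq (Quotient.mk sA a')) := hab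
    rw [← hq] at hab'
    have h5 := welldef' (hGa a) (hGa a') (Quotient.mk sA a) hab'
    have h6 : αa a' ((Quotient.mk sA a).out) = a' := by
      have := hαa a'; rw [← hq] at this; exact this
    rw [← hαa a, ← h6, h5]
  have hsurj : Function.Surjective h := by
    intro b
    set q := e.symm (Quotient.mk sB b) with hqdef
    have h1 : Quotient.mk sB (bq q) = Quotient.mk sB b := by
      rw [hbq q, hqdef, Equiv.apply_symm_apply]
    obtain ⟨α, β, hG, hβ⟩ := Quotient.exact h1
    refine ⟨α q.out, ?_⟩
    have hq : Quotient.mk sA (α q.out) = q := by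
      rw [mkA hG q.out, Quotient.out_eq]
    show βa (α q.out) (bq (Quotient.mk sA (α q.out))) = b
    rw [hq]
    have h2 : αa (α q.out) (q.out) = α q.out := by
      have := hαa (α q.out); rw [hq] at this; exact this
    have h3 := welldef (hGa (α q.out)) hG q h2
    rw [h3, hβ]
  refine ⟨Equiv.ofBijective h ⟨hinj, hsurj⟩, ?_⟩
  intro α β γ hγ htr
  have hγ1 : γ = 1 := Subgroup.mem_bot.1 hγ
  subst hγ1
  apply Equiv.ext
  intro a
  show β (h (α.symm a)) = h a
  have h1 := heq htr (α.symm a)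
  rw [Equiv.apply_symm_apply] at h1
  exact h1.symm
end

section
/- Let C be a nonempty finite set and let γ be a non-identity permutation of C. Then there exist countably infinite sets A and B and a bijection f : A × C → B × C that admits no ⟨γ⟩-equivariant quotient, where ⟨γ⟩ is the cyclic subgroup of S(C) generated by γ. -/
open Equiv


lemma pow_zmod_eq {G : Type*} [Group G] {p : ℕ} {g : G} (h : g ^ p = 1) {a b : ℕ}
    (hab : (a : ZMod p) = b) : g ^ a = g ^ b := by
  have hd : orderOf g ∣ p := orderOf_dvd_of_pow_eq_one h
  exact pow_eq_pow_iff_modEq.mpr (((ZMod.natCast_eq_natCast_iff a b p).mp hab).of_dvd hd)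

lemma zpow_zmod_eq {G : Type*} [Group G] {p : ℕ} {g : G} (h : g ^ p = 1) {a b : ℤ}
    (hab : (a : ZMod p) = b) : g ^ a = g ^ b := by
  have hd : ((orderOf g : ℤ)) ∣ (p : ℤ) := Int.natCast_dvd_natCast.mpr (orderOf_dvd_of_pow_eq_one h)
  exact zpow_eq_zpow_iff_modEq.mpr (((ZMod.intCast_eq_intCast_iff a b p).mp hab).of_dvd hd)

lemma exists_free_decomp {M : Type} [Finite M] {p : ℕ} (hp : p.Prime)
    (δ : Perm M) (hord : δ ^ p = 1) (hfree : ∀ x : M, δ x ≠ x) :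
    ∃ (T : Type) (_ : Finite T) (e : M ≃ T × ZMod p),
      ∀ x, e (δ x) = ((e x).1, (e x).2 + 1) := by
  haveI : Fact p.Prime := ⟨hp⟩
  -- injectivity of the orbit map
  have hinj : ∀ (x : M) (a b : ZMod p), (δ ^ a.val) x = (δ ^ b.val) x → a = b := by
    intro x a b hab
    have h1 : (δ ^ ((a.val : ℤ) - b.val)) x = x := by
      have : (δ ^ ((a.val : ℤ) - b.val)) ((δ ^ (b.val : ℤ)) x) = (δ ^ (b.val : ℤ)) x := by
        rw [← Perm.mul_apply, ← zpow_add, sub_add_cancel]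
        rw [zpow_natCast, zpow_natCast, hab]
      have h2 : (δ ^ ((a.val : ℤ) - b.val)) ((δ ^ (b.val : ℤ)) x) =
          (δ ^ (b.val : ℤ)) ((δ ^ ((a.val : ℤ) - b.val)) x) := by
        rw [← Perm.mul_apply, ← Perm.mul_apply, ← zpow_add, ← zpow_add, add_comm]
      rw [h2] at this
      exact (δ ^ ((b.val : ℤ))).injective (by rw [this])
    set d : ℤ := (a.val : ℤ) - b.val with hd
    have hdvd : (p : ℤ) ∣ d := by
      by_contra hnd
      have hnd' : ¬ p ∣ d.natAbs := fun h =>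
        hnd ((Int.natCast_dvd_natCast.mpr h).trans (Int.natAbs_dvd.mpr dvd_rfl))
      have hcop : IsCoprime (p : ℤ) d := by
        rw [Int.isCoprime_iff_gcd_eq_one, Int.gcd]
        simpa using hp.coprime_iff_not_dvd.mpr hnd'
      obtain ⟨u, v, huv⟩ := hcop
      have hfix : Function.IsFixedPt (⇑(δ ^ d)) x := h1
      have h4 : (δ ^ (v * d)) x = x := by
        have h5 := hfix.perm_zpow v
        rwa [← zpow_mul, mul_comm d v] at h5
      have h6 : δ x = x := by
        have h7 : (δ ^ (1 : ℤ)) x = x := by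
          rw [← huv, mul_comm u, zpow_add, Perm.mul_apply, h4, zpow_mul, zpow_natCast, hord,
            one_zpow, Perm.one_apply]
        simpa using h7
      exact hfree x h6
    -- conclude a = b
    have h8 : ((a.val : ℤ) : ZMod p) = ((b.val : ℤ) : ZMod p) := by
      have h9 := (ZMod.intCast_zmod_eq_zero_iff_dvd d p).mpr hdvd
      rw [hd, Int.cast_sub] at h9
      linear_combination h9
    have h10 : (a.val : ZMod p) = (b.val : ZMod p) := by push_cast at h8 ⊢; exact h8
    rwa [ZMod.natCast_val, ZMod.natCast_val, ZMod.cast_id, ZMod.cast_id] at h10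
  -- orbit representative and discrete log
  classical
  let St : Setoid M := Perm.SameCycle.setoid δ
  let T := Quotient St
  haveI : Finite T := Finite.of_surjective (Quotient.mk St) Quotient.mk_surjective
  let rep : M → M := fun x => (Quotient.mk St x).out
  have hrep : ∀ x, Perm.SameCycle δ (rep x) x := fun x =>
    Quotient.exact (Quotient.out_eq (Quotient.mk St x))
  have hex : ∀ x : M, ∃ k : ZMod p, (δ ^ k.val) (rep x) = x := by
    intro x
    obtain ⟨i, hi⟩ := hrep x
    refine ⟨(i : ZMod p), ?_⟩
    have hc : (((((i : ZMod p)).val : ℕ) : ℤ) : ZMod p) = ((i : ZMod p)) := by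
      push_cast
      rw [ZMod.natCast_val, ZMod.cast_id]
    have := zpow_zmod_eq hord (a := (((i : ZMod p)).val : ℤ)) (b := i) (by rw [hc])
    calc (δ ^ (((i : ZMod p)).val)) (rep x) = (δ ^ ((((i : ZMod p)).val : ℕ) : ℤ)) (rep x) := by
            rw [zpow_natCast]
      _ = (δ ^ i) (rep x) := by rw [this]
      _ = x := hi
  choose k hk using hex
  have hrepeq : ∀ x y : M, (Quotient.mk St x) = (Quotient.mk St y) → rep x = rep y := by
    intro x y h
    show (Quotient.mk St x).out = (Quotient.mk St y).out
    rw [h]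
  have huniq : ∀ (x : M) (j : ZMod p), (δ ^ j.val) (rep x) = x → k x = j := by
    intro x j hj
    exact hinj (rep x) (k x) j (by rw [hk x, hj])
  have hbij : Function.Bijective (fun x : M => ((Quotient.mk St x, k x) : T × ZMod p)) := by
    constructor
    · intro x y hxy
      have h1' : (Quotient.mk St x) = (Quotient.mk St y) := congrArg Prod.fst hxy
      have h2' : k x = k y := congrArg Prod.snd hxy
      rw [← hk x, ← hk y, hrepeq x y h1', h2']
    · rintro ⟨t, j⟩
      refine ⟨(δ ^ j.val) t.out, ?_⟩
      have hmk : Quotient.mk St ((δ ^ j.val) t.out) = t := by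
        have : Perm.SameCycle δ ((δ ^ j.val) t.out) t.out := ⟨-(j.val : ℤ), by
          rw [← Perm.mul_apply, ← zpow_natCast, ← zpow_add, neg_add_cancel, zpow_zero,
            Perm.one_apply]⟩
        calc Quotient.mk St ((δ ^ j.val) t.out) = Quotient.mk St t.out := Quotient.sound this
          _ = t := Quotient.out_eq t
      have hrept : rep ((δ ^ j.val) t.out) = t.out := by
        have := hrepeq ((δ ^ j.val) t.out) t.out ?_
        · rw [this]; show (Quotient.mk St t.out).out = t.out; rw [Quotient.out_eq]
        · rw [hmk, Quotient.out_eq]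
      have hkeq : k ((δ ^ j.val) t.out) = j := huniq _ j (by rw [hrept])
      simp only [hmk, hkeq]
  refine ⟨T, inferInstance, Equiv.ofBijective _ hbij, ?_⟩
  intro x
  have hmk : Quotient.mk St (δ x) = Quotient.mk St x :=
    Quotient.sound ⟨(-1 : ℤ), by simp⟩
  have hkd : k (δ x) = k x + 1 := by
    refine huniq (δ x) (k x + 1) ?_
    have hrd : rep (δ x) = rep x := hrepeq _ _ hmk
    have hvv : δ ^ ((k x + 1).val) = δ ^ ((k x).val + 1) := by
      apply pow_zmod_eq hord
      push_cast
      rw [ZMod.natCast_val, ZMod.cast_id, ZMod.natCast_val, ZMod.cast_id]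
    rw [hrd, hvv, pow_succ', Perm.mul_apply, hk x]
  show ((Quotient.mk St (δ x), k (δ x)) : T × ZMod p) = _
  rw [hmk, hkd]
  rfl

namespace CounterexampleAux

/-- step map on normal forms -/
def step {V S : Type} {p : ℕ} : V ⊕ (S × ZMod p) → V ⊕ (S × ZMod p) :=
  Sum.map id (fun q => (q.1, q.2 + 1))

/-- normal form equivalence -/
def nfE {C F T : Type} {p : ℕ} (eC : C ≃ F ⊕ T × ZMod p) (X : Type) :
    X × C ≃ (X × F) ⊕ ((X × T) × ZMod p) :=
  (Equiv.prodCongr (Equiv.refl X) eC).trans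
    ((Equiv.prodSumDistrib X F (T × ZMod p)).trans
      (Equiv.sumCongr (Equiv.refl (X × F)) (Equiv.prodAssoc X T (ZMod p)).symm))

lemma nfE_equivar {C F T : Type} {p : ℕ} (δ : Perm C) (eC : C ≃ F ⊕ T × ZMod p)
    (heC : ∀ c, eC (δ c) = Sum.map id (fun q => (q.1, q.2 + 1)) (eC c))
    (X : Type) (x : X) (c : C) :
    nfE eC X (x, δ c) = step (nfE eC X (x, c)) := by
  simp only [nfE, step, Equiv.trans_apply, Equiv.prodCongr_apply, Equiv.refl_apply,
    Prod.map_apply, heC c]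
  rcases eC c with f | ⟨t, i⟩ <;> rfl

/-- the twist equivalence: conjugates (s × δ) to (1 × s) -/
def Emap {C : Type} {p : ℕ} (δ : Perm C) : ZMod p × C ≃ C × ZMod p where
  toFun q := ((δ⁻¹ ^ q.1.val) q.2, q.1)
  invFun q := (q.2, (δ ^ q.2.val) q.1)
  left_inv q := by simp [inv_pow]
  right_inv q := by simp [inv_pow]

lemma Emap_equivar {C : Type} {p : ℕ} [NeZero p] (δ : Perm C) (hord : δ ^ p = 1)
    (i : ZMod p) (c : C) :
    Emap δ (i + 1, δ c) = ((Emap δ (i, c)).1, i + 1) := by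
  have hd : orderOf δ⁻¹ ∣ p := orderOf_dvd_of_pow_eq_one (by rw [inv_pow, hord, inv_one])
  have hv : (δ⁻¹ ^ ((i + 1).val)) = δ⁻¹ ^ (i.val + 1) := by
    refine pow_eq_pow_iff_modEq.mpr (Nat.ModEq.of_dvd hd ?_)
    rw [← ZMod.natCast_eq_natCast_iff]
    push_cast
    rw [ZMod.natCast_val, ZMod.cast_id, ZMod.natCast_val, ZMod.cast_id]
  simp only [Emap, Equiv.coe_fn_mk, hv, pow_succ, Perm.mul_apply]
  simp

/-- rearrangement -/
def Rmap (X Y Z W : Type) {p : ℕ} :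
    (X × ZMod p) ⊕ (Y ⊕ ((Z × W) × ZMod p)) ≃ Y ⊕ ((X ⊕ Z × W) × ZMod p) :=
  ((Equiv.sumAssoc (X × ZMod p) Y ((Z × W) × ZMod p)).symm.trans
    ((Equiv.sumCongr (Equiv.sumComm (X × ZMod p) Y) (Equiv.refl _)).trans
      (Equiv.sumAssoc Y (X × ZMod p) ((Z × W) × ZMod p)))).trans
    (Equiv.sumCongr (Equiv.refl Y) (Equiv.sumProdDistrib X (Z × W) (ZMod p)).symm)

lemma Rmap_equivar (X Y Z W : Type) {p : ℕ}
    (u : (X × ZMod p) ⊕ (Y ⊕ ((Z × W) × ZMod p))) :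
    Rmap X Y Z W (Sum.map (fun q => (q.1, q.2 + 1)) (step (p := p)) u) =
      step (Rmap X Y Z W u) := by
  rcases u with ⟨x, i⟩ | (y | ⟨zw, i⟩) <;> rfl


/-- the nontrivial permutation on the target index set -/
def βB (p : ℕ) : Perm (ZMod p ⊕ ℕ) :=
  Equiv.sumCongr (Equiv.addRight (1 : ZMod p)) (Equiv.refl ℕ)

/-- the target-side normal form equivalence -/
def Gmap {C F T : Type} {p : ℕ} (δ : Perm C) (eC : C ≃ F ⊕ T × ZMod p) :
    (ZMod p ⊕ ℕ) × C ≃ (ℕ × F) ⊕ ((C ⊕ ℕ × T) × ZMod p) :=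
  (Equiv.sumProdDistrib (ZMod p) ℕ C).trans
    ((Equiv.sumCongr (Emap δ) (nfE eC ℕ)).trans (Rmap C (ℕ × F) ℕ T))

lemma Gmap_equivar {C F T : Type} {p : ℕ} [NeZero p] (δ : Perm C) (hord : δ ^ p = 1)
    (eC : C ≃ F ⊕ T × ZMod p)
    (heC : ∀ c, eC (δ c) = Sum.map id (fun q => (q.1, q.2 + 1)) (eC c))
    (b : ZMod p ⊕ ℕ) (c : C) :
    Gmap δ eC (βB p b, δ c) = step (Gmap δ eC (b, c)) := by
  rcases b with i | n
  · have h1 : Gmap δ eC (βB p (Sum.inl i), δ c) =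
        Rmap C (ℕ × F) ℕ T (Sum.inl (Emap δ (i + 1, δ c))) := rfl
    have h2 : Gmap δ eC (Sum.inl i, c) =
        Rmap C (ℕ × F) ℕ T (Sum.inl (Emap δ (i, c))) := rfl
    rw [h1, h2, Emap_equivar δ hord i c]
    have h3 := Rmap_equivar C (ℕ × F) ℕ T (Sum.inl (Emap δ (i, c)))
    simpa [show (Emap δ (i, c)).2 = i from rfl] using h3
  · have h1 : Gmap δ eC (βB p (Sum.inr n), δ c) =
        Rmap C (ℕ × F) ℕ T (Sum.inr (nfE eC ℕ (n, δ c))) := rfl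
    have h2 : Gmap δ eC (Sum.inr n, c) =
        Rmap C (ℕ × F) ℕ T (Sum.inr (nfE eC ℕ (n, c))) := rfl
    rw [h1, h2, nfE_equivar δ eC heC ℕ n c]
    have h3 := Rmap_equivar C (ℕ × F) ℕ T (Sum.inr (nfE eC ℕ (n, c)))
    simpa using h3

/-- the orbit-space merge -/
def merge {C F T : Type} {p : ℕ} (q : ℕ × T ≃ C ⊕ ℕ × T) :
    (ℕ × F) ⊕ ((ℕ × T) × ZMod p) ≃ (ℕ × F) ⊕ ((C ⊕ ℕ × T) × ZMod p) :=
  Equiv.sumCongr (Equiv.refl _) (Equiv.prodCongr q (Equiv.refl _))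

lemma merge_equivar {C F T : Type} {p : ℕ} (q : ℕ × T ≃ C ⊕ ℕ × T)
    (u : (ℕ × F) ⊕ ((ℕ × T) × ZMod p)) :
    merge q (step u) = step (merge q u) := by
  rcases u with v | ⟨s, i⟩ <;> rfl

/-- the final bijection -/
def fFinal {C F T : Type} {p : ℕ} (δ : Perm C) (eC : C ≃ F ⊕ T × ZMod p)
    (q : ℕ × T ≃ C ⊕ ℕ × T) : ℕ × C ≃ (ZMod p ⊕ ℕ) × C :=
  (nfE eC ℕ).trans ((merge q).trans (Gmap δ eC).symm)

lemma fFinal_key {C F T : Type} {p : ℕ} [NeZero p] (δ : Perm C) (hord : δ ^ p = 1)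
    (eC : C ≃ F ⊕ T × ZMod p)
    (heC : ∀ c, eC (δ c) = Sum.map id (fun q => (q.1, q.2 + 1)) (eC c))
    (q : ℕ × T ≃ C ⊕ ℕ × T) (a : ℕ) (c : C) :
    fFinal δ eC q (a, δ c) =
      (βB p (fFinal δ eC q (a, c)).1, δ (fFinal δ eC q (a, c)).2) := by
  have hGsymm : ∀ w, (Gmap δ eC).symm (step w) =
      (βB p ((Gmap δ eC).symm w).1, δ ((Gmap δ eC).symm w).2) := by
    intro w
    set y := (Gmap δ eC).symm w with hy
    have hw : Gmap δ eC y = w := by rw [hy, Equiv.apply_symm_apply]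
    have := Gmap_equivar δ hord eC heC y.1 y.2
    rw [Prod.mk.eta, hw] at this
    rw [← this, Equiv.symm_apply_apply]
  simp only [fFinal, Equiv.trans_apply]
  rw [nfE_equivar δ eC heC ℕ a c, merge_equivar, hGsymm]

end CounterexampleAux

theorem nontrivial_perm_counterexample {C : Type} [Finite C] [Nonempty C]
    (γ : Equiv.Perm C) (hγ : γ ≠ 1) :
    ∃ (A B : Type), Countable A ∧ Infinite A ∧ Countable B ∧ Infinite B ∧
      ∃ f : A × C ≃ B × C, ∀ h : A ≃ B,
        ¬ IsEquivQuotient (Subgroup.zpowers γ) f h := by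
  classical
  have hmne : orderOf γ ≠ 1 := fun h => hγ (orderOf_eq_one_iff.mp h)
  set m := orderOf γ with hm
  have hm0 : m ≠ 0 := (orderOf_pos γ).ne'
  set p := m.minFac with hpdef
  have hp : p.Prime := Nat.minFac_prime hmne
  haveI : Fact p.Prime := ⟨hp⟩
  haveI : NeZero p := ⟨hp.ne_zero⟩
  set δ := γ ^ (m / p) with hδdef
  have hdvd : p ∣ m := Nat.minFac_dvd m
  have hδmem : δ ∈ Subgroup.zpowers γ := Subgroup.npow_mem_zpowers γ _
  have horder : orderOf δ = p := by
    rw [hδdef, orderOf_pow_of_dvd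
      (Nat.div_pos (Nat.le_of_dvd (Nat.pos_of_ne_zero hm0) hdvd) hp.pos).ne'
      (Nat.div_dvd_of_dvd hdvd), ← hm]
    exact Nat.div_div_self hdvd hm0
  have hord : δ ^ p = 1 := by rw [← horder]; exact pow_orderOf_eq_one δ
  have hδ1 : δ ≠ 1 := by
    intro h; rw [h, orderOf_one] at horder; exact hp.ne_one horder.symm
  -- decomposition of C into fixed and moved parts
  have hiff : ∀ c : C, (¬ δ c = c) ↔ ¬ δ (δ c) = δ c := fun c =>
    not_congr (Equiv.apply_eq_iff_eq δ).symm
  set δM : Perm {c : C // ¬ δ c = c} := δ.subtypePerm (fun c => (hiff c).symm) with hδM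
  have hordM : δM ^ p = 1 := by
    ext x
    simp [hδM, Equiv.Perm.subtypePerm_pow, Equiv.Perm.subtypePerm_apply, hord]
  have hfreeM : ∀ x : {c : C // ¬ δ c = c}, δM x ≠ x := fun x hx =>
    x.2 (congrArg Subtype.val hx)
  obtain ⟨T, hTfin, eM, heM⟩ := exists_free_decomp hp δM hordM hfreeM
  haveI : Finite T := hTfin
  -- T is nonempty
  have hMne : Nonempty {c : C // ¬ δ c = c} := by
    by_contra hne
    push_neg at hne
    exact hδ1 (Equiv.ext fun c => by
      by_contra hc
      exact (hne.elim ⟨c, fun h => hc (h.trans (Equiv.Perm.one_apply c).symm)⟩))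
  haveI : Nonempty T := ⟨(eM (Classical.choice hMne)).1⟩
  -- the equivariant decomposition of C
  set eC : C ≃ {c : C // δ c = c} ⊕ T × ZMod p :=
    (Equiv.sumCompl (fun c : C => δ c = c)).symm.trans
      (Equiv.sumCongr (Equiv.refl _) eM) with heCdef
  have heC : ∀ c, eC (δ c) = Sum.map id (fun q => (q.1, q.2 + 1)) (eC c) := by
    intro c
    by_cases h : δ c = c
    · have h1 : eC c = Sum.inl ⟨c, h⟩ := by
        rw [heCdef]
        simp only [Equiv.trans_apply]
        rw [Equiv.sumCompl_symm_apply_of_pos (p := fun c : C => δ c = c) h]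
        rfl
      have h2 : eC (δ c) = Sum.inl ⟨c, h⟩ := by rw [h, h1]
      rw [h1, h2]; rfl
    · have h' : ¬ δ (δ c) = δ c := (hiff c).mp h
      have h1 : eC c = Sum.inr (eM ⟨c, h⟩) := by
        rw [heCdef]
        simp only [Equiv.trans_apply]
        rw [Equiv.sumCompl_symm_apply_of_neg (p := fun c : C => δ c = c) h]
        rfl
      have h2 : eC (δ c) = Sum.inr (eM ⟨δ c, h'⟩) := by
        rw [heCdef]
        simp only [Equiv.trans_apply]
        rw [Equiv.sumCompl_symm_apply_of_neg (p := fun c : C => δ c = c) h']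
        rfl
      have h3 : (⟨δ c, h'⟩ : {c : C // ¬ δ c = c}) = δM ⟨c, h⟩ := rfl
      rw [h1, h2, h3, heM ⟨c, h⟩]
      rfl
  -- the merge of orbit spaces
  haveI : Infinite (ℕ × T) := Prod.infinite_of_left
  obtain ⟨i1⟩ := nonempty_denumerable (ℕ × T)
  obtain ⟨i2⟩ := nonempty_denumerable (C ⊕ ℕ × T)
  let q : ℕ × T ≃ C ⊕ ℕ × T := (@Denumerable.eqv _ i1).trans (@Denumerable.eqv _ i2).symm
  -- the final bijection
  refine ⟨ℕ, ZMod p ⊕ ℕ, inferInstance, inferInstance, inferInstance, inferInstance,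
    CounterexampleAux.fFinal δ eC q, ?_⟩
  intro h hquot
  set f := CounterexampleAux.fFinal δ eC q with hf
  have hfix : transform f 1 (CounterexampleAux.βB p) δ = f := by
    apply Equiv.ext
    rintro ⟨a, c⟩
    have hkey := CounterexampleAux.fFinal_key δ hord eC heC q a (δ⁻¹ c)
    simp only [Equiv.Perm.inv_def, Equiv.apply_symm_apply] at hkey
    show (Equiv.prodCongr (CounterexampleAux.βB p) δ)
        (f ((Equiv.prodCongr (1 : Equiv.Perm ℕ) δ).symm (a, c))) = f (a, c)
    have hsymm : (Equiv.prodCongr (1 : Equiv.Perm ℕ) δ).symm (a, c) = (a, δ⁻¹ c) := rfl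
    rw [hsymm]
    show (CounterexampleAux.βB p ((f (a, δ⁻¹ c)).1), δ ((f (a, δ⁻¹ c)).2)) = f (a, c)
    rw [Equiv.Perm.inv_def, ← hkey]
  have hq := hquot 1 (CounterexampleAux.βB p) δ hδmem hfix
  -- contradiction
  have h0 := congrArg (fun e : ℕ ≃ ZMod p ⊕ ℕ => e (h.symm (Sum.inl 0))) hq
  simp only [transformQ, Equiv.trans_apply, Equiv.apply_symm_apply] at h0
  have h1 : (CounterexampleAux.βB p) (Sum.inl 0) = Sum.inl 0 := by
    have : h ((1 : Equiv.Perm ℕ).symm (h.symm (Sum.inl (0 : ZMod p)))) = Sum.inl 0 := by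
      exact h.apply_symm_apply _
    rw [this] at h0
    exact h0
  have h2 : (CounterexampleAux.βB p) (Sum.inl (0 : ZMod p)) = Sum.inl 1 := by
    simp [CounterexampleAux.βB]
  rw [h2] at h1
  haveI : Fact (1 < p) := ⟨hp.one_lt⟩
  exact one_ne_zero (Sum.inl.inj h1)
end

section
/- (Feldman–Propp) Let C be a nonempty finite set and Γ a subgroup of the symmetric group S(C). If there exists a point ∗ ∈ C with γ(∗) = ∗ for every γ ∈ Γ, then Γ is finitely cancelling: for all finite sets A, B, every bijection f : A × C → B × C has a Γ-equivariant quotient. -/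
lemma transform_apply {A B C : Type} (f : A × C ≃ B × C) (α : Equiv.Perm A) (β : Equiv.Perm B)
    (γ : Equiv.Perm C) (a : A) (c : C) :
    transform f α β γ (a, c) = (β (f (α⁻¹ a, γ⁻¹ c)).1, γ (f (α⁻¹ a, γ⁻¹ c)).2) := by
  simp [transform, Equiv.prodCongr_symm, Equiv.prodCongr_apply, Equiv.Perm.inv_def, Prod.map]

lemma transform_one {A B C : Type} (f : A × C ≃ B × C) : transform f 1 1 1 = f := by
  ext p
  · obtain ⟨a, c⟩ := p; rw [transform_apply]; simp
  · obtain ⟨a, c⟩ := p; rw [transform_apply]; simp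

lemma transform_mul {A B C : Type} (f : A × C ≃ B × C) (α α' : Equiv.Perm A)
    (β β' : Equiv.Perm B) (γ γ' : Equiv.Perm C) :
    transform f (α * α') (β * β') (γ * γ') = transform (transform f α' β' γ') α β γ := by
  ext p
  · obtain ⟨a, c⟩ := p
    rw [transform_apply, transform_apply, transform_apply]
    simp [mul_inv_rev, Equiv.Perm.mul_apply]
  · obtain ⟨a, c⟩ := p
    rw [transform_apply, transform_apply, transform_apply]
    simp [mul_inv_rev, Equiv.Perm.mul_apply]

lemma transform_fixed_apply {A B C : Type} {f : A × C ≃ B × C} {α : Equiv.Perm A}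
    {β : Equiv.Perm B} {γ : Equiv.Perm C} (h : transform f α β γ = f) (a : A) (c : C) :
    f (α a, γ c) = (β (f (a, c)).1, γ (f (a, c)).2) := by
  conv_lhs => rw [← h]
  rw [transform_apply]
  simp


def stabS {G X : Type} [Group G] (ρ : G →* Equiv.Perm X) (x : X) : Subgroup G where
  carrier := {g | ρ g x = x}
  one_mem' := by simp
  mul_mem' := by
    intro a b ha hb
    simp only [Set.mem_setOf_eq, map_mul, Equiv.Perm.mul_apply] at *
    rw [hb, ha]
  inv_mem' := by
    intro a ha
    simp only [Set.mem_setOf_eq] at *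
    conv_lhs => rw [← ha]
    rw [← Equiv.Perm.mul_apply, ← map_mul, inv_mul_cancel, map_one, Equiv.Perm.one_apply]

@[simp] lemma mem_stabS {G X : Type} [Group G] (ρ : G →* Equiv.Perm X) (x : X) (g : G) :
    g ∈ stabS ρ x ↔ ρ g x = x := Iff.rfl


lemma card_split {X : Type} [Finite X] (s o : Set X) (P : X → Prop) (h : o ⊆ s) :
    Nat.card {x : X // x ∈ s ∧ P x} =
      Nat.card {x : X // x ∈ s \ o ∧ P x} + Nat.card {x : X // x ∈ o ∧ P x} := by
  classical
  have e1 : {x : X | x ∈ s ∧ P x} = {x : X | x ∈ s \ o ∧ P x} ∪ {x : X | x ∈ o ∧ P x} := by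
    ext z
    by_cases hz : z ∈ o
    · simp [Set.mem_diff, hz, h hz]
    · simp [Set.mem_diff, hz]
  have hdisj : Disjoint {x : X | x ∈ s \ o ∧ P x} {x : X | x ∈ o ∧ P x} := by
    rw [Set.disjoint_left]
    rintro z ⟨⟨-, hz⟩, -⟩ ⟨hz', -⟩
    exact hz hz'
  have c1 : Nat.card {x : X // x ∈ s ∧ P x} = Set.ncard {x : X | x ∈ s ∧ P x} :=
    Nat.card_coe_set_eq _
  have c2 : Nat.card {x : X // x ∈ s \ o ∧ P x} = Set.ncard {x : X | x ∈ s \ o ∧ P x} :=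
    Nat.card_coe_set_eq _
  have c3 : Nat.card {x : X // x ∈ o ∧ P x} = Set.ncard {x : X | x ∈ o ∧ P x} :=
    Nat.card_coe_set_eq _
  rw [c1, c2, c3, e1, Set.ncard_union_eq hdisj (Set.toFinite _) (Set.toFinite _)]


theorem equivariant_aux {G X Y : Type} [Group G] [Finite G] [Finite X] [Finite Y]
    [Nonempty X] [Nonempty Y]
    (ρ : G →* Equiv.Perm X) (σ : G →* Equiv.Perm Y) :
    ∀ (n : ℕ) (s : Set X) (t : Set Y),
      Nat.card s = n →
      (∀ g : G, ∀ x ∈ s, ρ g x ∈ s) →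
      (∀ g : G, ∀ y ∈ t, σ g y ∈ t) →
      (∀ H : Subgroup G,
        Nat.card {x : X // x ∈ s ∧ ∀ g ∈ H, ρ g x = x} =
        Nat.card {y : Y // y ∈ t ∧ ∀ g ∈ H, σ g y = y}) →
      ∃ (φ : X → Y) (ψ : Y → X),
        (∀ x ∈ s, φ x ∈ t) ∧ (∀ y ∈ t, ψ y ∈ s) ∧
        (∀ x ∈ s, ψ (φ x) = x) ∧ (∀ y ∈ t, φ (ψ y) = y) ∧
        (∀ (g : G), ∀ x ∈ s, φ (ρ g x) = σ g (φ x)) := by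
  intro n
  induction n using Nat.strong_induction_on with
  | _ n ih =>
  intro s t hcard hs ht hfix
  rcases s.eq_empty_or_nonempty with hse | ⟨x0, hx0⟩
  · subst hse
    have hte : t = ∅ := by
      by_contra hne
      obtain ⟨y, hy⟩ := Set.nonempty_iff_ne_empty.mpr hne
      have h1 : 0 < Nat.card {y : Y // y ∈ t ∧ ∀ g ∈ (⊥ : Subgroup G), σ g y = y} := by
        refine Nat.card_pos_iff.mpr ⟨⟨⟨y, hy, ?_⟩⟩, inferInstance⟩
        intro g hg
        rw [Subgroup.mem_bot] at hg
        subst hg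
        simp
      rw [← hfix ⊥] at h1
      simp [Nat.card_of_isEmpty] at h1
    subst hte
    exact ⟨fun _ => Classical.arbitrary Y, fun _ => Classical.arbitrary X,
      by simp, by simp, by simp, by simp, by simp⟩
  · classical
    haveI : Finite (Subgroup G) :=
      Finite.of_injective (fun H => (H : Set G)) SetLike.coe_injective
    set 𝒮 : Set (Subgroup G) := {H | ∃ x ∈ s, ∀ g ∈ H, ρ g x = x} with h𝒮
    have hbot : (⊥ : Subgroup G) ∈ 𝒮 := by
      refine ⟨x0, hx0, ?_⟩
      intro g hg
      rw [Subgroup.mem_bot] at hg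
      subst hg; simp
    obtain ⟨H, HS, Hmax0⟩ :=
      (Set.toFinite 𝒮).exists_maximal ⟨⊥, hbot⟩
    have Hmax : ∀ H' ∈ 𝒮, H ≤ H' → H = H' := fun H' h1 h2 => le_antisymm h2 (Hmax0 h1 h2)
    obtain ⟨x, hxs, hxfix⟩ := HS
    -- a fixed point on the Y side
    have hYne : Nonempty {y : Y // y ∈ t ∧ ∀ g ∈ H, σ g y = y} := by
      have h1 : 0 < Nat.card {x : X // x ∈ s ∧ ∀ g ∈ H, ρ g x = x} :=
        Nat.card_pos_iff.mpr ⟨⟨⟨x, hxs, hxfix⟩⟩, inferInstance⟩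
      rw [hfix H] at h1
      exact (Nat.card_pos_iff.mp h1).1
    obtain ⟨y, hyt, hyfix⟩ := hYne.some
    -- stabilizers both equal H
    have hstabx : H = stabS ρ x :=
      Hmax _ ⟨x, hxs, fun g hg => hg⟩ (fun g hg => hxfix g hg)
    have hstaby : H = stabS σ y := by
      refine Hmax _ ?_ (fun g hg => hyfix g hg)
      have h1 : 0 < Nat.card {x : X // x ∈ s ∧ ∀ g ∈ stabS σ y, ρ g x = x} := by
        rw [hfix]
        exact Nat.card_pos_iff.mpr ⟨⟨⟨y, hyt, fun g hg => hg⟩⟩, inferInstance⟩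
      obtain ⟨⟨x', hx's, hx'f⟩⟩ := (Nat.card_pos_iff.mp h1).1
      exact ⟨x', hx's, hx'f⟩
    have hstab : ∀ g : G, ρ g x = x ↔ σ g y = y := by
      intro g
      constructor
      · intro h; have : g ∈ H := hstabx ▸ h; exact (hstaby ▸ this : g ∈ stabS σ y)
      · intro h; have : g ∈ H := hstaby ▸ h; exact (hstabx ▸ this : g ∈ stabS ρ x)
    -- the two orbits
    set o : Set X := Set.range (fun g => ρ g x) with ho
    set oy : Set Y := Set.range (fun g => σ g y) with hoy
    have hxo : x ∈ o := ⟨1, by simp⟩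
    have hyo : y ∈ oy := ⟨1, by simp⟩
    have hosub : o ⊆ s := by rintro _ ⟨g, rfl⟩; exact hs g x hxs
    have hoysub : oy ⊆ t := by rintro _ ⟨g, rfl⟩; exact ht g y hyt
    have hoinv : ∀ g : G, ∀ x' ∈ o, ρ g x' ∈ o := by
      rintro g _ ⟨g', rfl⟩
      exact ⟨g * g', by simp [map_mul, Equiv.Perm.mul_apply]⟩
    have hoyinv : ∀ g : G, ∀ y' ∈ oy, σ g y' ∈ oy := by
      rintro g _ ⟨g', rfl⟩
      exact ⟨g * g', by simp [map_mul, Equiv.Perm.mul_apply]⟩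

    -- canonical maps between the orbits
    set φ₀ : X → Y := fun x' =>
      if h : ∃ g : G, ρ g x = x' then σ h.choose y else Classical.arbitrary Y with hφ₀def
    set ψ₀ : Y → X := fun y' =>
      if h : ∃ g : G, σ g y = y' then ρ h.choose x else Classical.arbitrary X with hψ₀def
    have keyX : ∀ g g' : G, ρ g' x = ρ g x → σ g' y = σ g y := by
      intro g g' hgg
      have h1 : ρ (g⁻¹ * g') x = x := by
        rw [map_mul, Equiv.Perm.mul_apply, hgg, ← Equiv.Perm.mul_apply, ← map_mul,
          inv_mul_cancel, map_one, Equiv.Perm.one_apply]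
      have h2 : σ (g⁻¹ * g') y = y := (hstab _).mp h1
      calc σ g' y = σ (g * (g⁻¹ * g')) y := by rw [mul_inv_cancel_left]
      _ = σ g (σ (g⁻¹ * g') y) := by rw [map_mul, Equiv.Perm.mul_apply]
      _ = σ g y := by rw [h2]
    have keyY : ∀ g g' : G, σ g' y = σ g y → ρ g' x = ρ g x := by
      intro g g' hgg
      have h1 : σ (g⁻¹ * g') y = y := by
        rw [map_mul, Equiv.Perm.mul_apply, hgg, ← Equiv.Perm.mul_apply, ← map_mul,
          inv_mul_cancel, map_one, Equiv.Perm.one_apply]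
      have h2 : ρ (g⁻¹ * g') x = x := (hstab _).mpr h1
      calc ρ g' x = ρ (g * (g⁻¹ * g')) x := by rw [mul_inv_cancel_left]
      _ = ρ g (ρ (g⁻¹ * g') x) := by rw [map_mul, Equiv.Perm.mul_apply]
      _ = ρ g x := by rw [h2]
    have hφ₀ : ∀ g : G, φ₀ (ρ g x) = σ g y := by
      intro g
      have hex : ∃ g' : G, ρ g' x = ρ g x := ⟨g, rfl⟩
      rw [hφ₀def]
      simp only [dif_pos hex]
      exact keyX g _ hex.choose_spec
    have hψ₀ : ∀ g : G, ψ₀ (σ g y) = ρ g x := by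
      intro g
      have hex : ∃ g' : G, σ g' y = σ g y := ⟨g, rfl⟩
      rw [hψ₀def]
      simp only [dif_pos hex]
      exact keyY g _ hex.choose_spec
    have hφ₀mem : ∀ x' ∈ o, φ₀ x' ∈ oy := by
      rintro _ ⟨g, rfl⟩; rw [hφ₀ g]; exact ⟨g, rfl⟩
    have hψ₀mem : ∀ y' ∈ oy, ψ₀ y' ∈ o := by
      rintro _ ⟨g, rfl⟩; rw [hψ₀ g]; exact ⟨g, rfl⟩
    have hψφ : ∀ x' ∈ o, ψ₀ (φ₀ x') = x' := by
      rintro _ ⟨g, rfl⟩; rw [hφ₀ g, hψ₀ g]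
    have hφψ : ∀ y' ∈ oy, φ₀ (ψ₀ y') = y' := by
      rintro _ ⟨g, rfl⟩; rw [hψ₀ g, hφ₀ g]
    have hφ₀equi : ∀ (g : G), ∀ x' ∈ o, φ₀ (ρ g x') = σ g (φ₀ x') := by
      rintro g _ ⟨g', rfl⟩
      rw [← Equiv.Perm.mul_apply, ← map_mul, hφ₀, hφ₀, map_mul, Equiv.Perm.mul_apply]

    have hψ₀equi : ∀ (g : G), ∀ y' ∈ oy, ψ₀ (σ g y') = ρ g (ψ₀ y') := by
      intro g y' hy'
      have h1 : ψ₀ (σ g y') ∈ o := hψ₀mem _ (hoyinv g y' hy')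
      have h2 : ρ g (ψ₀ y') ∈ o := hoinv g _ (hψ₀mem y' hy')
      have h3 : φ₀ (ψ₀ (σ g y')) = φ₀ (ρ g (ψ₀ y')) := by
        rw [hφψ _ (hoyinv g y' hy'), hφ₀equi g _ (hψ₀mem y' hy'), hφψ y' hy']
      calc ψ₀ (σ g y') = ψ₀ (φ₀ (ψ₀ (σ g y'))) := (hψφ _ h1).symm
      _ = ψ₀ (φ₀ (ρ g (ψ₀ y'))) := by rw [h3]
      _ = ρ g (ψ₀ y') := hψφ _ h2
    -- fixed-point counts agree on the two orbits
    have horb : ∀ H' : Subgroup G,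
        Nat.card {x' : X // x' ∈ o ∧ ∀ g ∈ H', ρ g x' = x'} =
        Nat.card {y' : Y // y' ∈ oy ∧ ∀ g ∈ H', σ g y' = y'} := by
      intro H'
      refine Nat.card_congr ⟨fun z => ⟨φ₀ z.1, hφ₀mem z.1 z.2.1, ?_⟩,
        fun w => ⟨ψ₀ w.1, hψ₀mem w.1 w.2.1, ?_⟩, ?_, ?_⟩
      · intro g hg
        rw [← hφ₀equi g z.1 z.2.1, z.2.2 g hg]
      · intro g hg
        rw [← hψ₀equi g w.1 w.2.1, w.2.2 g hg]
      · rintro ⟨z, hz, -⟩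
        exact Subtype.ext (hψφ z hz)
      · rintro ⟨w, hw, -⟩
        exact Subtype.ext (hφψ w hw)
    -- fixed-point counts for the complements
    have hfix' : ∀ H' : Subgroup G,
        Nat.card {x' : X // x' ∈ s \ o ∧ ∀ g ∈ H', ρ g x' = x'} =
        Nat.card {y' : Y // y' ∈ t \ oy ∧ ∀ g ∈ H', σ g y' = y'} := by
      intro H'
      have e1 := card_split s o (fun x' => ∀ g ∈ H', ρ g x' = x') hosub
      have e2 := card_split t oy (fun y' => ∀ g ∈ H', σ g y' = y') hoysub
      beta_reduce at e1 e2
      have e3 := hfix H'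
      have e4 := horb H'
      omega
    -- invariance of the complements
    have hs' : ∀ g : G, ∀ x' ∈ s \ o, ρ g x' ∈ s \ o := by
      rintro g x' ⟨hx's, hx'o⟩
      refine ⟨hs g x' hx's, fun hmem => hx'o ?_⟩
      have := hoinv g⁻¹ _ hmem
      rwa [← Equiv.Perm.mul_apply, ← map_mul, inv_mul_cancel, map_one,
        Equiv.Perm.one_apply] at this
    have ht' : ∀ g : G, ∀ y' ∈ t \ oy, σ g y' ∈ t \ oy := by
      rintro g y' ⟨hy't, hy'o⟩
      refine ⟨ht g y' hy't, fun hmem => hy'o ?_⟩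
      have := hoyinv g⁻¹ _ hmem
      rwa [← Equiv.Perm.mul_apply, ← map_mul, inv_mul_cancel, map_one,
        Equiv.Perm.one_apply] at this
    -- the complement is strictly smaller
    have hlt : Nat.card (s \ o : Set X) < n := by
      rw [← hcard, Nat.card_coe_set_eq, Nat.card_coe_set_eq]
      refine Set.ncard_lt_ncard ?_ (Set.toFinite _)
      rw [Set.ssubset_iff_of_subset Set.diff_subset]
      exact ⟨x, hxs, fun hmem => hmem.2 hxo⟩
    obtain ⟨φ', ψ', hφ't, hψ's, hψφ', hφψ', hequi'⟩ :=
      ih _ hlt (s \ o) (t \ oy) rfl hs' ht' hfix'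
    -- assemble the final maps
    refine ⟨fun x' => if x' ∈ o then φ₀ x' else φ' x',
      fun y' => if y' ∈ oy then ψ₀ y' else ψ' y', ?_, ?_, ?_, ?_, ?_⟩
    · intro x' hx'
      beta_reduce
      by_cases hmem : x' ∈ o
      · rw [if_pos hmem]; exact hoysub (hφ₀mem x' hmem)
      · rw [if_neg hmem]; exact (hφ't x' ⟨hx', hmem⟩).1
    · intro y' hy'
      beta_reduce
      by_cases hmem : y' ∈ oy
      · rw [if_pos hmem]; exact hosub (hψ₀mem y' hmem)
      · rw [if_neg hmem]; exact (hψ's y' ⟨hy', hmem⟩).1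
    · intro x' hx'
      beta_reduce
      by_cases hmem : x' ∈ o
      · rw [if_pos hmem, if_pos (hφ₀mem x' hmem)]; exact hψφ x' hmem
      · rw [if_neg hmem, if_neg (hφ't x' ⟨hx', hmem⟩).2]; exact hψφ' x' ⟨hx', hmem⟩
    · intro y' hy'
      beta_reduce
      by_cases hmem : y' ∈ oy
      · rw [if_pos hmem, if_pos (hψ₀mem y' hmem)]; exact hφψ y' hmem
      · rw [if_neg hmem, if_neg (hψ's y' ⟨hy', hmem⟩).2]; exact hφψ' y' ⟨hy', hmem⟩
    · intro g x' hx'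
      beta_reduce
      by_cases hmem : x' ∈ o
      · rw [if_pos hmem, if_pos (hoinv g x' hmem)]; exact hφ₀equi g x' hmem
      · have hnmem : ρ g x' ∉ o := by
          intro hc
          have := hoinv g⁻¹ _ hc
          rw [← Equiv.Perm.mul_apply, ← map_mul, inv_mul_cancel, map_one,
            Equiv.Perm.one_apply] at this
          exact hmem this
        rw [if_neg hmem, if_neg hnmem]
        exact hequi' g x' ⟨hx', hmem⟩

theorem exists_equivariant {G X Y : Type} [Group G] [Finite G] [Finite X] [Finite Y]
    (ρ : G →* Equiv.Perm X) (σ : G →* Equiv.Perm Y)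
    (hfix : ∀ H : Subgroup G,
      Nat.card {x : X // ∀ g ∈ H, ρ g x = x} = Nat.card {y : Y // ∀ g ∈ H, σ g y = y}) :
    ∃ e : X ≃ Y, ∀ (g : G) (x : X), e (ρ g x) = σ g (e x) := by
  classical
  cases isEmpty_or_nonempty X with
  | inl hX =>
    have hY : IsEmpty Y := by
      by_contra h
      rw [not_isEmpty_iff] at h
      have h1 : 0 < Nat.card {y : Y // ∀ g ∈ (⊥ : Subgroup G), σ g y = y} := by
        refine Nat.card_pos_iff.mpr ⟨⟨⟨h.some, ?_⟩⟩, inferInstance⟩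
        intro g hg
        rw [Subgroup.mem_bot] at hg
        subst hg; simp
      rw [← hfix ⊥] at h1
      simp [Nat.card_of_isEmpty] at h1
    exact ⟨Equiv.equivOfIsEmpty X Y, fun g x => (hX.false x).elim⟩
  | inr hX =>
    have hY : Nonempty Y := by
      have h1 : 0 < Nat.card {x : X // ∀ g ∈ (⊥ : Subgroup G), ρ g x = x} := by
        refine Nat.card_pos_iff.mpr ⟨⟨⟨hX.some, ?_⟩⟩, inferInstance⟩
        intro g hg
        rw [Subgroup.mem_bot] at hg
        subst hg; simp
      rw [hfix ⊥] at h1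
      obtain ⟨⟨y, -⟩⟩ := (Nat.card_pos_iff.mp h1).1
      exact ⟨y⟩
    have hfix' : ∀ H : Subgroup G,
        Nat.card {x : X // x ∈ (Set.univ : Set X) ∧ ∀ g ∈ H, ρ g x = x} =
        Nat.card {y : Y // y ∈ (Set.univ : Set Y) ∧ ∀ g ∈ H, σ g y = y} := by
      intro H
      have e1 : {x : X // x ∈ (Set.univ : Set X) ∧ ∀ g ∈ H, ρ g x = x} ≃
          {x : X // ∀ g ∈ H, ρ g x = x} := Equiv.subtypeEquivRight (by simp)
      have e2 : {y : Y // y ∈ (Set.univ : Set Y) ∧ ∀ g ∈ H, σ g y = y} ≃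
          {y : Y // ∀ g ∈ H, σ g y = y} := Equiv.subtypeEquivRight (by simp)
      rw [Nat.card_congr e1, Nat.card_congr e2]
      exact hfix H
    obtain ⟨φ, ψ, -, -, hψφ, hφψ, hequi⟩ :=
      equivariant_aux ρ σ (Nat.card (Set.univ : Set X)) Set.univ Set.univ rfl
        (fun _ _ _ => trivial) (fun _ _ _ => trivial) hfix'
    exact ⟨⟨φ, ψ, fun x => hψφ x trivial, fun y => hφψ y trivial⟩,
      fun g x => hequi g x trivial⟩

theorem fixed_point_finitely_cancelling {C : Type} [Finite C] [Nonempty C]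
    (Γ : Subgroup (Equiv.Perm C)) (star : C) (hstar : ∀ γ ∈ Γ, γ star = star) :
    FinitelyCancelling C Γ := by
  intro A B hA hB f
  haveI := hA
  haveI := hB
  classical
  -- the stabilizer of `f`
  set K : Subgroup (Equiv.Perm A × Equiv.Perm B × Equiv.Perm C) :=
  { carrier := {m | m.2.2 ∈ Γ ∧ transform f m.1 m.2.1 m.2.2 = f}
    one_mem' := ⟨Γ.one_mem, transform_one f⟩
    mul_mem' := by
      rintro m m' ⟨h1, h2⟩ ⟨h1', h2'⟩
      refine ⟨Γ.mul_mem h1 h1', ?_⟩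
      show transform f (m.1 * m'.1) (m.2.1 * m'.2.1) (m.2.2 * m'.2.2) = f
      rw [transform_mul, h2', h2]
    inv_mem' := by
      rintro m ⟨h1, h2⟩
      refine ⟨Γ.inv_mem h1, ?_⟩
      have h3 := transform_mul f m.1⁻¹ m.1 m.2.1⁻¹ m.2.1 m.2.2⁻¹ m.2.2
      rw [h2, inv_mul_cancel, inv_mul_cancel, inv_mul_cancel, transform_one] at h3
      exact h3.symm } with hK
  have hKmem : ∀ m : Equiv.Perm A × Equiv.Perm B × Equiv.Perm C,
      m ∈ K ↔ (m.2.2 ∈ Γ ∧ transform f m.1 m.2.1 m.2.2 = f) := fun m => Iff.rfl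
  haveI : Finite ↥K := inferInstance
  set ρ : ↥K →* Equiv.Perm A := (MonoidHom.fst _ _).comp K.subtype with hρ
  set σ : ↥K →* Equiv.Perm B :=
    (MonoidHom.fst _ _).comp ((MonoidHom.snd _ _).comp K.subtype) with hσ
  have hfix : ∀ H : Subgroup ↥K,
      Nat.card {a : A // ∀ g ∈ H, ρ g a = a} = Nat.card {b : B // ∀ g ∈ H, σ g b = b} := by
    intro H
    set FA := {a : A // ∀ g ∈ H, ρ g a = a}
    set FB := {b : B // ∀ g ∈ H, σ g b = b}
    set FC := {c : C // ∀ g ∈ H, (g : Equiv.Perm A × Equiv.Perm B × Equiv.Perm C).2.2 c = c}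
    have key : ∀ g : ↥K, ∀ a c,
        f ((g : Equiv.Perm A × Equiv.Perm B × Equiv.Perm C).1 a,
           (g : Equiv.Perm A × Equiv.Perm B × Equiv.Perm C).2.2 c) =
        ((g : Equiv.Perm A × Equiv.Perm B × Equiv.Perm C).2.1 (f (a, c)).1,
         (g : Equiv.Perm A × Equiv.Perm B × Equiv.Perm C).2.2 (f (a, c)).2) := by
      intro g a c
      exact transform_fixed_apply ((hKmem _).mp g.2).2 a c
    have keysymm : ∀ g : ↥K, ∀ b c,
        f.symm ((g : Equiv.Perm A × Equiv.Perm B × Equiv.Perm C).2.1 b,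
           (g : Equiv.Perm A × Equiv.Perm B × Equiv.Perm C).2.2 c) =
        ((g : Equiv.Perm A × Equiv.Perm B × Equiv.Perm C).1 (f.symm (b, c)).1,
         (g : Equiv.Perm A × Equiv.Perm B × Equiv.Perm C).2.2 (f.symm (b, c)).2) := by
      intro g b c
      have h1 := key g (f.symm (b, c)).1 (f.symm (b, c)).2
      rw [Prod.mk.eta, Equiv.apply_symm_apply] at h1
      rw [← h1, Equiv.symm_apply_apply]
    have E : FA × FC ≃ FB × FC := by
      refine ⟨fun p => (⟨(f (p.1.1, p.2.1)).1, ?_⟩, ⟨(f (p.1.1, p.2.1)).2, ?_⟩),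
        fun q => (⟨(f.symm (q.1.1, q.2.1)).1, ?_⟩, ⟨(f.symm (q.1.1, q.2.1)).2, ?_⟩), ?_, ?_⟩
      · intro g hg
        have h1 := key g p.1.1 p.2.1
        have ha : (g : Equiv.Perm A × Equiv.Perm B × Equiv.Perm C).1 p.1.1 = p.1.1 := p.1.2 g hg
        have hc : (g : Equiv.Perm A × Equiv.Perm B × Equiv.Perm C).2.2 p.2.1 = p.2.1 := p.2.2 g hg
        rw [ha, hc] at h1
        exact (congrArg Prod.fst h1).symm
      · intro g hg
        have h1 := key g p.1.1 p.2.1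
        have ha : (g : Equiv.Perm A × Equiv.Perm B × Equiv.Perm C).1 p.1.1 = p.1.1 := p.1.2 g hg
        have hc : (g : Equiv.Perm A × Equiv.Perm B × Equiv.Perm C).2.2 p.2.1 = p.2.1 := p.2.2 g hg
        rw [ha, hc] at h1
        exact (congrArg Prod.snd h1).symm
      · intro g hg
        have h1 := keysymm g q.1.1 q.2.1
        have hb : (g : Equiv.Perm A × Equiv.Perm B × Equiv.Perm C).2.1 q.1.1 = q.1.1 := q.1.2 g hg
        have hc : (g : Equiv.Perm A × Equiv.Perm B × Equiv.Perm C).2.2 q.2.1 = q.2.1 := q.2.2 g hg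
        rw [hb, hc] at h1
        exact (congrArg Prod.fst h1).symm
      · intro g hg
        have h1 := keysymm g q.1.1 q.2.1
        have hb : (g : Equiv.Perm A × Equiv.Perm B × Equiv.Perm C).2.1 q.1.1 = q.1.1 := q.1.2 g hg
        have hc : (g : Equiv.Perm A × Equiv.Perm B × Equiv.Perm C).2.2 q.2.1 = q.2.1 := q.2.2 g hg
        rw [hb, hc] at h1
        exact (congrArg Prod.snd h1).symm
      · rintro ⟨⟨a, ha⟩, ⟨c, hc⟩⟩
        have h1 : f.symm ((f (a, c)).1, (f (a, c)).2) = (a, c) := by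
          rw [Prod.mk.eta, Equiv.symm_apply_apply]
        refine Prod.ext (Subtype.ext ?_) (Subtype.ext ?_)
        · exact congrArg Prod.fst h1
        · exact congrArg Prod.snd h1
      · rintro ⟨⟨b, hb⟩, ⟨c, hc⟩⟩
        have h1 : f ((f.symm (b, c)).1, (f.symm (b, c)).2) = (b, c) := by
          rw [Prod.mk.eta, Equiv.apply_symm_apply]
        refine Prod.ext (Subtype.ext ?_) (Subtype.ext ?_)
        · exact congrArg Prod.fst h1
        · exact congrArg Prod.snd h1
    have hcards : Nat.card FA * Nat.card FC = Nat.card FB * Nat.card FC := by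
      rw [← Nat.card_prod, ← Nat.card_prod]
      exact Nat.card_congr E
    have hFC : 0 < Nat.card FC := by
      refine Nat.card_pos_iff.mpr ⟨⟨⟨star, ?_⟩⟩, inferInstance⟩
      intro g hg
      exact hstar _ ((hKmem _).mp g.2).1
    exact Nat.eq_of_mul_eq_mul_right hFC hcards
  obtain ⟨e, hequi⟩ := exists_equivariant ρ σ hfix
  refine ⟨e, ?_⟩
  intro α β γ hγ htr
  have hm : (α, β, γ) ∈ K := (hKmem _).mpr ⟨hγ, htr⟩
  ext a
  show β (e (α.symm a)) = e a
  have h1 := hequi ⟨(α, β, γ), hm⟩ (α.symm a)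
  have h2 : ρ ⟨(α, β, γ), hm⟩ (α.symm a) = α (α.symm a) := rfl
  have h3 : σ ⟨(α, β, γ), hm⟩ (e (α.symm a)) = β (e (α.symm a)) := rfl
  rw [h2, h3, Equiv.apply_symm_apply] at h1
  exact h1.symm
end
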